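/- arXiv:2510.06034 — 8 statements merged into one kernel-verified Lean document; each statement's English description precedes it below -/
import Mathlib

section
/- Let (𝕏,d_𝕏) and (𝕐,d_𝕐) be metric spaces and equip 𝕏 × 𝕐 with the distance d((x,y),(x',y')) = d_𝕏(x,x') + d_𝕐(y,y'). Then for any pair (X,Y) with finite p-th moments, W_{d,p}(L(X,Y), L(X) ⊗ L(Y))^p ≤ E[d_𝕐(Y,Y')^p], where Y' is an independent copy of Y. -/
open MeasureTheory ProbabilityTheory

/-- The Wasserstein distance of order `p` with ground cost `d`, defined as the infimum
over couplings of `P` and `Q` of the `p`-th root of the expected `p`-th power cost. -/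
noncomputable def Wass {α : Type*} [MeasurableSpace α]
    (d : α → α → ℝ) (p : ℝ) (P Q : Measure α) : ℝ :=
  sInf ((fun γ : Measure (α × α) => (∫ z, d z.1 z.2 ^ p ∂γ) ^ (1 / p)) ''
    {γ | γ.map Prod.fst = P ∧ γ.map Prod.snd = Q})

/-! The law of `((X, Y), (X, Y'))` couples `L(X, Y)` with `L(X) ⊗ L(Y)`: its second marginal is
`L(X, Y') = L(X) ⊗ L(Y')` by independence, and `L(Y') = L(Y)`. Along this coupling the cost is
`d_𝕏(X, X) + d_𝕐(Y, Y') = d_𝕐(Y, Y')`. -/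

lemma Wass_rpow_le_integral {α : Type*} [MeasurableSpace α] {d : α → α → ℝ}
    (hd : ∀ x y, 0 ≤ d x y) {p : ℝ} (hp : 0 < p) {P Q : Measure α} {γ : Measure (α × α)}
    (hγP : γ.map Prod.fst = P) (hγQ : γ.map Prod.snd = Q) :
    Wass d p P Q ^ p ≤ ∫ z, d z.1 z.2 ^ p ∂γ := by
  have cost_nonneg : ∀ γ : Measure (α × α), 0 ≤ ∫ z, d z.1 z.2 ^ p ∂γ := fun γ =>
    integral_nonneg fun z => Real.rpow_nonneg (hd z.1 z.2) p
  have hmem : (∫ z, d z.1 z.2 ^ p ∂γ) ^ (1 / p) ∈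
      (fun γ : Measure (α × α) => (∫ z, d z.1 z.2 ^ p ∂γ) ^ (1 / p)) ''
        {γ | γ.map Prod.fst = P ∧ γ.map Prod.snd = Q} :=
    ⟨γ, ⟨hγP, hγQ⟩, rfl⟩
  have hlower : ∀ w ∈ (fun γ : Measure (α × α) => (∫ z, d z.1 z.2 ^ p ∂γ) ^ (1 / p)) ''
      {γ | γ.map Prod.fst = P ∧ γ.map Prod.snd = Q}, 0 ≤ w :=
    Set.forall_mem_image.2 fun γ' _ => Real.rpow_nonneg (cost_nonneg γ') _
  calc Wass d p P Q ^ p ≤ ((∫ z, d z.1 z.2 ^ p ∂γ) ^ (1 / p)) ^ p :=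
        Real.rpow_le_rpow (le_csInf ⟨_, hmem⟩ hlower) (csInf_le ⟨0, hlower⟩ hmem) hp.le
    _ = ∫ z, d z.1 z.2 ^ p ∂γ := by
        rw [← Real.rpow_mul (cost_nonneg γ), one_div_mul_cancel hp.ne', Real.rpow_one]

/-- No measurability of `f` is needed: otherwise the left side is the junk value `0`. -/
lemma integral_map_le_integral_comp {α β : Type*} [MeasurableSpace α] [MeasurableSpace β]
    {μ : Measure α} {φ : α → β} (hφ : AEMeasurable φ μ) {f : β → ℝ} (hf : ∀ y, 0 ≤ f y) :
    ∫ y, f y ∂(μ.map φ) ≤ ∫ x, f (φ x) ∂μ := by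
  by_cases hmeas : AEStronglyMeasurable f (μ.map φ)
  · exact (integral_map hφ hmeas).le
  · rw [integral_undef fun hint => hmeas hint.aestronglyMeasurable]
    exact integral_nonneg fun x => hf (φ x)

theorem stmt2_general {Ω 𝕏 𝕐 : Type*} [MeasurableSpace Ω]
    [MetricSpace 𝕏] [MeasurableSpace 𝕏]
    [MetricSpace 𝕐] [MeasurableSpace 𝕐]
    (μ : Measure Ω) [IsProbabilityMeasure μ]
    (X : Ω → 𝕏) (Y : Ω → 𝕐) (hX : Measurable X) (hY : Measurable Y)
    (p : ℝ) (hp : 1 ≤ p)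
    (Y' : Ω → 𝕐) (hY' : Measurable Y')
    (hindep : IndepFun (fun ω => (X ω, Y ω)) Y' μ)
    (hcopy : μ.map Y' = μ.map Y) :
    Wass (fun z z' => dist z.1 z'.1 + dist z.2 z'.2) p
        (μ.map (fun ω => (X ω, Y ω))) ((μ.map X).prod (μ.map Y)) ^ p
      ≤ ∫ ω, dist (Y ω) (Y' ω) ^ p ∂μ := by
  set T : Ω → (𝕏 × 𝕐) × (𝕏 × 𝕐) := fun ω => ((X ω, Y ω), (X ω, Y' ω))
  have hT : Measurable T := (hX.prodMk hY).prodMk (hX.prodMk hY')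
  have hXY' : μ.map (fun ω => (X ω, Y' ω)) = (μ.map X).prod (μ.map Y) := by
    rw [(indepFun_iff_map_prod_eq_prod_map_map hX.aemeasurable hY'.aemeasurable).mp
      (hindep.comp measurable_fst measurable_id), hcopy]
  calc _ ≤ ∫ z, (dist z.1.1 z.2.1 + dist z.1.2 z.2.2) ^ p ∂(μ.map T) :=
        Wass_rpow_le_integral (fun _ _ => by positivity) (by linarith)
          (by rw [Measure.map_map measurable_fst hT]; rfl)
          (by rw [Measure.map_map measurable_snd hT]; exact hXY')
    _ ≤ ∫ ω, (dist (X ω) (X ω) + dist (Y ω) (Y' ω)) ^ p ∂μ :=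
        integral_map_le_integral_comp hT.aemeasurable fun _ => by positivity
    _ = ∫ ω, dist (Y ω) (Y' ω) ^ p ∂μ := by simp only [dist_self, zero_add]

theorem stmt2 {Ω 𝕏 𝕐 : Type*} [MeasurableSpace Ω]
    [MetricSpace 𝕏] [PolishSpace 𝕏] [MeasurableSpace 𝕏] [BorelSpace 𝕏]
    [MetricSpace 𝕐] [PolishSpace 𝕐] [MeasurableSpace 𝕐] [BorelSpace 𝕐]
    (μ : Measure Ω) [IsProbabilityMeasure μ]
    (X : Ω → 𝕏) (Y : Ω → 𝕐) (hX : Measurable X) (hY : Measurable Y)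
    (p : ℝ) (hp : 1 ≤ p) (x₀ : 𝕏) (y₀ : 𝕐)
    (hmX : Integrable (fun ω => dist (X ω) x₀ ^ p) μ)
    (hmY : Integrable (fun ω => dist (Y ω) y₀ ^ p) μ)
    (Y' : Ω → 𝕐) (hY' : Measurable Y')
    (hindep : IndepFun (fun ω => (X ω, Y ω)) Y' μ)
    (hcopy : μ.map Y' = μ.map Y) :
    Wass (fun z z' => dist z.1 z'.1 + dist z.2 z'.2) p
        (μ.map (fun ω => (X ω, Y ω))) ((μ.map X).prod (μ.map Y)) ^ p
      ≤ ∫ ω, dist (Y ω) (Y' ω) ^ p ∂μ :=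
  stmt2_general μ X Y hX hY p hp Y' hY' hindep hcopy
end

section
/- Suppose Y = f(X) almost surely where f : 𝕏 → 𝕐 is 1-Lipschitz on the support of L(X). Then with the ℓ¹ product metric d((x,y),(x',y')) = d_𝕏(x,x') + d_𝕐(y,y'), equality holds: W_{d,p}(L(X,Y), L(X) ⊗ L(Y))^p = E[d_𝕐(Y,Y')^p], where Y' is an independent copy of Y. -/
open MeasureTheory ProbabilityTheory

/-- The (topological) support of a measure: points all of whose neighborhoods
have positive measure. -/
def msupport {α : Type*} [TopologicalSpace α] [MeasurableSpace α] (ν : Measure α) : Set α :=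
  {x | ∀ U ∈ nhds x, ν U ≠ 0}

/-!
Extend `f` off the support `S` of `L(X)` to a measurable `g`, so that `Y = g X` a.s. Under any
coupling of `L(X, Y)` and `L(X) ⊗ L(Y)`, almost every pair `((x, y), (x', y'))` has `x, x' ∈ S`
and `y = g x`, hence `d(g x', y') ≤ d(g x', g x) + d(g x, y') ≤ d(x, x') + d(y, y')`. So the cost
of the coupling is at least `∫ d(g x', y')^p d(L(X) ⊗ L(Y)) = E d(Y, Y')^p`, the pair `(g x', y')`
having law `L(Y) ⊗ L(Y)`. The coupling `((X, Y), (X, Y'))` attains this value.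

The moment assumptions make the cost integrable under every coupling; without that, the Bochner
integral in `Wass` would be `0` for some couplings.
-/

lemma msupport_eq_support {α : Type*} [TopologicalSpace α] [MeasurableSpace α] (ν : Measure α) :
    msupport ν = ν.support := by
  ext x
  simp [msupport, Measure.mem_support_iff_forall, pos_iff_ne_zero]

section Coupling

variable {α : Type*} [MeasurableSpace α]

def couplings (P Q : Measure α) : Set (Measure (α × α)) :=
  {γ | γ.map Prod.fst = P ∧ γ.map Prod.snd = Q}

lemma wass_rpow_eq_of_isLeast {d : α → α → ℝ} {p : ℝ} (hp : 0 < p) {P Q : Measure α} {C : ℝ}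
    (hC : 0 ≤ C) (h : IsLeast ((fun γ => ∫ z, d z.1 z.2 ^ p ∂γ) '' couplings P Q) C) :
    Wass d p P Q ^ p = C := by
  have hmono : MonotoneOn (· ^ (1 / p)) ((fun γ => ∫ z, d z.1 z.2 ^ p ∂γ) '' couplings P Q) :=
    (Real.monotoneOn_rpow_Ici_of_exponent_nonneg (by positivity)).mono
      fun c hc => hC.trans (h.2 hc)
  have hW : Wass d p P Q = C ^ (1 / p) := by
    rw [← (hmono.map_isLeast h).csInf_eq, Set.image_image]
    rfl
  rw [hW, ← Real.rpow_mul hC, one_div_mul_cancel hp.ne', Real.rpow_one]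

end Coupling

lemma LipschitzOnWith.exists_measurable_eqOn {α β : Type*} [PseudoEMetricSpace α]
    [MeasurableSpace α] [OpensMeasurableSpace α] [PseudoEMetricSpace β] [MeasurableSpace β]
    [BorelSpace β] {K : NNReal} {s : Set α} {f : α → β} (hf : LipschitzOnWith K f s)
    (hs : MeasurableSet s) (b : β) :
    ∃ g : α → β, Measurable g ∧ LipschitzOnWith K g s ∧ Set.EqOn g f s := by
  classical
  refine ⟨s.piecewise f fun _ => b, hf.continuousOn.measurable_piecewise continuousOn_const hs,
    fun x hx x' hx' => ?_, s.piecewise_eqOn _ _⟩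
  simpa only [Set.piecewise_eq_of_mem _ _ _ hx, Set.piecewise_eq_of_mem _ _ _ hx'] using hf hx hx'

lemma MemLp.dist_of_dist_const {β α : Type*} [MeasurableSpace β] [PseudoMetricSpace α]
    {γ : Measure β} {q : ENNReal} {u v : β → α} {a : α}
    (hu : MemLp (fun b => dist (u b) a) q γ) (hv : MemLp (fun b => dist (v b) a) q γ)
    (huv : AEStronglyMeasurable (fun b => dist (u b) (v b)) γ) :
    MemLp (fun b => dist (u b) (v b)) q γ :=
  (hu.add hv).mono huv <| .of_forall fun b => by
    rw [Real.norm_eq_abs, Real.norm_eq_abs, abs_dist, Pi.add_apply,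
      abs_of_nonneg (add_nonneg dist_nonneg dist_nonneg)]
    exact dist_triangle_right _ _ _

section ProductCost

variable {𝕏 𝕐 : Type*} [PseudoMetricSpace 𝕏] [MeasurableSpace 𝕏]
  [PseudoMetricSpace 𝕐] [SecondCountableTopology 𝕐] [MeasurableSpace 𝕐] [BorelSpace 𝕐]

lemma integrable_rpow_dist_add_dist_of_mem_couplings [SecondCountableTopology 𝕏] [BorelSpace 𝕏]
    {p : ℝ} (hp : 0 < p) {x₀ : 𝕏} {y₀ : 𝕐} {ν₁ : Measure 𝕏} {ν₂ : Measure 𝕐}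
    (h₁ : MemLp (fun x => dist x x₀) (.ofReal p) ν₁)
    (h₂ : MemLp (fun y => dist y y₀) (.ofReal p) ν₂)
    {P Q : Measure (𝕏 × 𝕐)} (hP₁ : P.fst = ν₁) (hP₂ : P.snd = ν₂) (hQ₁ : Q.fst = ν₁)
    (hQ₂ : Q.snd = ν₂)
    {γ : Measure ((𝕏 × 𝕐) × (𝕏 × 𝕐))} (hγ : γ ∈ couplings P Q) :
    Integrable (fun z => (dist z.1.1 z.2.1 + dist z.1.2 z.2.2) ^ p) γ := by
  obtain ⟨hγ₁, hγ₂⟩ := hγ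
  have hx : MemLp (fun z : (𝕏 × 𝕐) × (𝕏 × 𝕐) => dist z.1.1 z.2.1) (.ofReal p) γ := by
    refine MemLp.dist_of_dist_const (a := x₀) ?_ ?_ (by fun_prop)
    · exact (h₁.comp_measurePreserving ⟨measurable_fst, hP₁⟩).comp_measurePreserving
        ⟨measurable_fst, hγ₁⟩
    · exact (h₁.comp_measurePreserving ⟨measurable_fst, hQ₁⟩).comp_measurePreserving
        ⟨measurable_snd, hγ₂⟩
  have hy : MemLp (fun z : (𝕏 × 𝕐) × (𝕏 × 𝕐) => dist z.1.2 z.2.2) (.ofReal p) γ := by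
    refine MemLp.dist_of_dist_const (a := y₀) ?_ ?_ (by fun_prop)
    · exact (h₂.comp_measurePreserving ⟨measurable_snd, hP₂⟩).comp_measurePreserving
        ⟨measurable_fst, hγ₁⟩
    · exact (h₂.comp_measurePreserving ⟨measurable_snd, hQ₂⟩).comp_measurePreserving
        ⟨measurable_snd, hγ₂⟩
  refine ((hx.add hy).integrable_norm_rpow (by simpa using hp) ENNReal.ofReal_ne_top).congr
    (.of_forall fun z => ?_)
  simp [ENNReal.toReal_ofReal hp.le, abs_of_nonneg (add_nonneg dist_nonneg dist_nonneg)]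

lemma integral_dist_comp_rpow_le_of_mem_couplings {p : ℝ} (hp : 0 ≤ p) {S : Set 𝕏} {g : 𝕏 → 𝕐}
    (hg : Measurable g) (hgS : LipschitzOnWith 1 g S) {P Q : Measure (𝕏 × 𝕐)}
    (hP : ∀ᵐ w ∂P, w.1 ∈ S ∧ w.2 = g w.1) (hQ : ∀ᵐ w ∂Q, w.1 ∈ S)
    {γ : Measure ((𝕏 × 𝕐) × (𝕏 × 𝕐))} (hγ : γ ∈ couplings P Q)
    (hint : Integrable (fun z => (dist z.1.1 z.2.1 + dist z.1.2 z.2.2) ^ p) γ) :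
    ∫ w, dist (g w.1) w.2 ^ p ∂Q ≤ ∫ z, (dist z.1.1 z.2.1 + dist z.1.2 z.2.2) ^ p ∂γ := by
  obtain ⟨rfl, rfl⟩ := hγ
  have hle : ∀ᵐ z ∂γ, dist (g z.2.1) z.2.2 ^ p ≤ (dist z.1.1 z.2.1 + dist z.1.2 z.2.2) ^ p := by
    filter_upwards [ae_of_ae_map measurable_fst.aemeasurable hP,
      ae_of_ae_map measurable_snd.aemeasurable hQ] with z ⟨hx, hy⟩ hx'
    gcongr
    calc dist (g z.2.1) z.2.2 ≤ dist (g z.2.1) (g z.1.1) + dist (g z.1.1) z.2.2 :=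
          dist_triangle _ _ _
      _ ≤ dist z.1.1 z.2.1 + dist z.1.2 z.2.2 := by
          rw [hy, dist_comm z.1.1]
          gcongr
          simpa using hgS.dist_le_mul _ hx' _ hx
  rw [integral_map measurable_snd.aemeasurable (by fun_prop)]
  exact integral_mono_of_nonneg (.of_forall fun _ => by positivity) hint hle

end ProductCost

section RandomVariables

variable {Ω : Type*} [MeasurableSpace Ω] {μ : Measure Ω}

lemma memLp_dist_map_of_integrable_rpow {α : Type*} [PseudoMetricSpace α] [MeasurableSpace α]
    [OpensMeasurableSpace α] {X : Ω → α} (hX : Measurable X) {p : ℝ} (hp : 0 < p) {a : α}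
    (h : Integrable (fun ω => dist (X ω) a ^ p) μ) :
    MemLp (fun x => dist x a) (.ofReal p) (μ.map X) := by
  have hdist : Measurable fun x => dist x a := (continuous_id.dist continuous_const).measurable
  rw [memLp_map_measure_iff hdist.aestronglyMeasurable hX.aemeasurable,
    ← integrable_norm_rpow_iff (hdist.comp hX).aestronglyMeasurable (by simpa using hp)
      ENNReal.ofReal_ne_top]
  simpa [ENNReal.toReal_ofReal hp.le] using h

variable [IsFiniteMeasure μ] {α β : Type*} [MeasurableSpace α] [MeasurableSpace β]
  {X : Ω → α} {Y Y' : Ω → β}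

lemma map_pair_mem_couplings (hX : Measurable X) (hY : Measurable Y) (hY' : Measurable Y')
    (hindep : IndepFun (fun ω => (X ω, Y ω)) Y' μ) (hcopy : μ.map Y' = μ.map Y) :
    μ.map (fun ω => ((X ω, Y ω), (X ω, Y' ω))) ∈
      couplings (μ.map fun ω => (X ω, Y ω)) ((μ.map X).prod (μ.map Y)) := by
  have hF : Measurable fun ω => ((X ω, Y ω), (X ω, Y' ω)) := by fun_prop
  constructor
  · rw [Measure.map_map measurable_fst hF]
    rfl
  · rw [Measure.map_map measurable_snd hF, ← hcopy]
    exact (indepFun_iff_map_prod_eq_prod_map_map hX.aemeasurable hY'.aemeasurable).1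
      (hindep.comp measurable_fst measurable_id)

lemma integral_comp_prodMap_eq_of_indepFun {g : α → β} (hX : Measurable X) (hY : Measurable Y)
    (hY' : Measurable Y') (hg : Measurable g) (hYg : ∀ᵐ ω ∂μ, Y ω = g (X ω))
    (hindep : IndepFun Y Y' μ) (hcopy : μ.map Y' = μ.map Y) {φ : β × β → ℝ}
    (hφ : Measurable φ) :
    ∫ w, φ (g w.1, w.2) ∂(μ.map X).prod (μ.map Y) = ∫ ω, φ (Y ω, Y' ω) ∂μ := by
  have hlaw : ((μ.map X).prod (μ.map Y)).map (Prod.map g id) = μ.map fun ω => (Y ω, Y' ω) := by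
    rw [← Measure.map_prod_map _ _ hg measurable_id, Measure.map_map hg hX, Measure.map_id,
      (indepFun_iff_map_prod_eq_prod_map_map hY.aemeasurable hY'.aemeasurable).1 hindep, hcopy,
      ← (Measure.map_congr hYg : μ.map Y = μ.map (g ∘ X))]
  calc ∫ w, φ (g w.1, w.2) ∂(μ.map X).prod (μ.map Y)
      = ∫ v, φ v ∂((μ.map X).prod (μ.map Y)).map (Prod.map g id) :=
        (integral_map (by fun_prop) hφ.aestronglyMeasurable).symm
    _ = ∫ ω, φ (Y ω, Y' ω) ∂μ := by
        rw [hlaw, integral_map (by fun_prop) hφ.aestronglyMeasurable]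

end RandomVariables

theorem stmt3 {Ω 𝕏 𝕐 : Type*} [MeasurableSpace Ω]
    [MetricSpace 𝕏] [PolishSpace 𝕏] [MeasurableSpace 𝕏] [BorelSpace 𝕏]
    [MetricSpace 𝕐] [PolishSpace 𝕐] [MeasurableSpace 𝕐] [BorelSpace 𝕐]
    (μ : Measure Ω) [IsProbabilityMeasure μ]
    (X : Ω → 𝕏) (Y : Ω → 𝕐) (hX : Measurable X) (hY : Measurable Y)
    (p : ℝ) (hp : 1 ≤ p) (x₀ : 𝕏) (y₀ : 𝕐)
    (hmX : Integrable (fun ω => dist (X ω) x₀ ^ p) μ)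
    (hmY : Integrable (fun ω => dist (Y ω) y₀ ^ p) μ)
    (Y' : Ω → 𝕐) (hY' : Measurable Y')
    (hindep : IndepFun (fun ω => (X ω, Y ω)) Y' μ)
    (hcopy : μ.map Y' = μ.map Y)
    (f : 𝕏 → 𝕐) (hf : LipschitzOnWith 1 f (msupport (μ.map X)))
    (hfX : ∀ᵐ ω ∂μ, Y ω = f (X ω)) :
    Wass (fun z z' => dist z.1 z'.1 + dist z.2 z'.2) p
        (μ.map (fun ω => (X ω, Y ω))) ((μ.map X).prod (μ.map Y)) ^ p
      = ∫ ω, dist (Y ω) (Y' ω) ^ p ∂μ := by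
  have hp₀ : 0 < p := by linarith
  have := Measure.isProbabilityMeasure_map (μ := μ) hX.aemeasurable
  have := Measure.isProbabilityMeasure_map (μ := μ) hY.aemeasurable
  rw [msupport_eq_support] at hf
  set S := (μ.map X).support
  obtain ⟨g, hg, hgS, hgf⟩ := hf.exists_measurable_eqOn Measure.isClosed_support.measurableSet y₀
  have hXS : ∀ᵐ ω ∂μ, X ω ∈ S := ae_of_ae_map hX.aemeasurable Measure.support_mem_ae
  have hYg : ∀ᵐ ω ∂μ, Y ω = g (X ω) := by
    filter_upwards [hfX, hXS] with ω hω hXω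
    rw [hω, hgf hXω]
  have hP : ∀ᵐ w ∂μ.map fun ω => (X ω, Y ω), w.1 ∈ S ∧ w.2 = g w.1 :=
    (ae_map_iff (by fun_prop) ((measurable_fst Measure.isClosed_support.measurableSet).inter
      (measurableSet_eq_fun measurable_snd (hg.comp measurable_fst)))).2 (hXS.and hYg)
  have hQ : ∀ᵐ w ∂(μ.map X).prod (μ.map Y), w.1 ∈ S :=
    Measure.quasiMeasurePreserving_fst.ae Measure.support_mem_ae
  refine wass_rpow_eq_of_isLeast hp₀ (integral_nonneg fun _ => by positivity) ⟨?_, ?_⟩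
  · refine ⟨_, map_pair_mem_couplings hX hY hY' hindep hcopy, ?_⟩
    dsimp only
    rw [integral_map (by fun_prop) (by fun_prop (disch := linarith))]
    simp
  · rintro _ ⟨γ, hγ, rfl⟩
    rw [← integral_comp_prodMap_eq_of_indepFun hX hY hY' hg hYg
      (hindep.comp measurable_snd measurable_id) hcopy (φ := fun v => dist v.1 v.2 ^ p)
      (by fun_prop)]
    exact integral_dist_comp_rpow_le_of_mem_couplings hp₀.le hg hgS hP hQ hγ
      (integrable_rpow_dist_add_dist_of_mem_couplings hp₀
        (memLp_dist_map_of_integrable_rpow hX hp₀ hmX)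
        (memLp_dist_map_of_integrable_rpow hY hp₀ hmY) (Measure.fst_map_prodMk hY)
        (Measure.snd_map_prodMk hX) Measure.fst_prod Measure.snd_prod hγ)
end

section
/- For random variables X valued in 𝕏 and Y valued in a Polish metric space (𝕐, d_𝕐) with finite p-th moment, the averaged conditional Wasserstein measure satisfies E_X[W_{d_𝕐,p}(L(Y|X), L(Y))^p] ≤ E[d_𝕐(Y,Y')^p], where Y' is an independent copy of Y. -/
open MeasureTheory ProbabilityTheory

section Wasserstein

variable {α : Type*} [MeasurableSpace α] {d : α → α → ℝ} {p : ℝ} {P Q : Measure α}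

lemma integral_rpow_cost_nonneg (hd : ∀ x y, 0 ≤ d x y) (γ : Measure (α × α)) :
    0 ≤ ∫ z, d z.1 z.2 ^ p ∂γ :=
  integral_nonneg fun z ↦ Real.rpow_nonneg (hd z.1 z.2) p

lemma Wass_nonneg (hd : ∀ x y, 0 ≤ d x y) : 0 ≤ Wass d p P Q :=
  Real.sInf_nonneg <| by
    rintro _ ⟨γ, -, rfl⟩
    exact Real.rpow_nonneg (integral_rpow_cost_nonneg hd γ) _

lemma Wass_rpow_le_integral_of_coupling (hd : ∀ x y, 0 ≤ d x y) (hp : 0 < p)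
    {γ : Measure (α × α)} (hγ₁ : γ.map Prod.fst = P) (hγ₂ : γ.map Prod.snd = Q) :
    Wass d p P Q ^ p ≤ ∫ z, d z.1 z.2 ^ p ∂γ := by
  have hbdd : BddBelow ((fun γ : Measure (α × α) ↦ (∫ z, d z.1 z.2 ^ p ∂γ) ^ (1 / p)) ''
      {γ | γ.map Prod.fst = P ∧ γ.map Prod.snd = Q}) := ⟨0, by
    rintro _ ⟨γ, -, rfl⟩
    exact Real.rpow_nonneg (integral_rpow_cost_nonneg hd γ) _⟩
  calc Wass d p P Q ^ p ≤ ((∫ z, d z.1 z.2 ^ p ∂γ) ^ (1 / p)) ^ p :=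
        Real.rpow_le_rpow (Wass_nonneg hd) (csInf_le hbdd ⟨γ, ⟨hγ₁, hγ₂⟩, rfl⟩) hp.le
    _ = ∫ z, d z.1 z.2 ^ p ∂γ := by
        rw [← Real.rpow_mul (integral_rpow_cost_nonneg hd γ), one_div_mul_cancel hp.ne',
          Real.rpow_one]

lemma Wass_rpow_le_integral_prod (hd : ∀ x y, 0 ≤ d x y) (hp : 0 < p)
    [IsProbabilityMeasure P] [IsProbabilityMeasure Q] :
    Wass d p P Q ^ p ≤ ∫ z, d z.1 z.2 ^ p ∂(P.prod Q) :=
  Wass_rpow_le_integral_of_coupling hd hp (by simp) (by simp)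

end Wasserstein

section Moments

variable {𝕐 : Type*} [PseudoMetricSpace 𝕐] {p : ℝ}

lemma dist_rpow_le_mul_add (hp : 1 ≤ p) (x y z : 𝕐) :
    dist x y ^ p ≤ 2 ^ (p - 1) * (dist x z ^ p + dist y z ^ p) :=
  calc dist x y ^ p ≤ (dist x z + dist y z) ^ p :=
        Real.rpow_le_rpow dist_nonneg (dist_triangle_right x y z) (by linarith)
    _ ≤ 2 ^ (p - 1) * (dist x z ^ p + dist y z ^ p) := by
        exact_mod_cast NNReal.rpow_add_le_mul_rpow_add_rpow (nndist x z) (nndist y z) hp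

lemma integrable_dist_rpow_prod [SecondCountableTopology 𝕐] [MeasurableSpace 𝕐] [BorelSpace 𝕐]
    (hp : 1 ≤ p) (y₀ : 𝕐) {ν₁ ν₂ : Measure 𝕐} [IsFiniteMeasure ν₁] [IsFiniteMeasure ν₂]
    (h₁ : Integrable (fun y ↦ dist y y₀ ^ p) ν₁)
    (h₂ : Integrable (fun y ↦ dist y y₀ ^ p) ν₂) :
    Integrable (fun z : 𝕐 × 𝕐 ↦ dist z.1 z.2 ^ p) (ν₁.prod ν₂) := by
  refine Integrable.mono' (((h₁.comp_fst ν₂).add (h₂.comp_snd ν₁)).const_mul (2 ^ (p - 1)))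
    ?_ (ae_of_all _ fun z ↦ ?_)
  · exact ((continuous_fst.dist continuous_snd).rpow_const
      fun _ ↦ Or.inr (by linarith)).aestronglyMeasurable
  · rw [Real.norm_of_nonneg (Real.rpow_nonneg dist_nonneg p)]
    exact dist_rpow_le_mul_add hp z.1 z.2 y₀

end Moments

namespace MeasureTheory

variable {α β γ E : Type*} [MeasurableSpace α] [MeasurableSpace β] [MeasurableSpace γ]
  [NormedAddCommGroup E] [NormedSpace ℝ E] {κ : Kernel α β} [IsSFiniteKernel κ]
  {μ : Measure α} [SFinite μ] {ν : Measure γ} [SFinite ν] {f : β × γ → E}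

lemma Measure.comp_prod_eq_comp_const_apply :
    (κ ∘ₘ μ).prod ν = ((κ ×ₖ Kernel.const α ν) ∘ₖ Kernel.const Unit μ) () := by
  rw [Kernel.prod_const_comp, Kernel.prod_apply, ← Measure.comp_eq_comp_const_apply,
    Kernel.const_apply]

lemma Integrable.integral_comp_prod (hf : Integrable f ((κ ∘ₘ μ).prod ν)) :
    Integrable (fun x ↦ ∫ z, f z ∂(κ x).prod ν) μ := by
  rw [Measure.comp_prod_eq_comp_const_apply] at hf
  simpa [Kernel.prod_apply] using hf.integral_comp

lemma Measure.integral_comp_prod (hf : Integrable f ((κ ∘ₘ μ).prod ν)) :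
    ∫ z, f z ∂(κ ∘ₘ μ).prod ν = ∫ x, ∫ z, f z ∂(κ x).prod ν ∂μ := by
  rw [Measure.comp_prod_eq_comp_const_apply] at hf ⊢
  simpa [Kernel.prod_apply] using Kernel.integral_comp hf

end MeasureTheory

theorem stmt4 {Ω 𝕏 𝕐 : Type*} [MeasurableSpace Ω] [MeasurableSpace 𝕏]
    [MetricSpace 𝕐] [PolishSpace 𝕐] [MeasurableSpace 𝕐] [BorelSpace 𝕐] [Nonempty 𝕐]
    (μ : Measure Ω) [IsProbabilityMeasure μ]
    (X : Ω → 𝕏) (Y : Ω → 𝕐) (hX : Measurable X) (hY : Measurable Y)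
    (p : ℝ) (hp : 1 ≤ p) (y₀ : 𝕐)
    (hmY : Integrable (fun ω => dist (Y ω) y₀ ^ p) μ)
    (Y' : Ω → 𝕐) (hY' : Measurable Y')
    (hindep : IndepFun Y Y' μ) (hcopy : μ.map Y' = μ.map Y) :
    (∫ x, Wass (fun y y' => dist y y') p (condDistrib Y X μ x) (μ.map Y) ^ p ∂(μ.map X))
      ≤ ∫ ω, dist (Y ω) (Y' ω) ^ p ∂μ := by
  have hp₀ : 0 < p := by linarith
  set ν := μ.map Y
  have : IsProbabilityMeasure ν := Measure.isProbabilityMeasure_map hY.aemeasurable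
  have hcost : Continuous fun z : 𝕐 × 𝕐 ↦ dist z.1 z.2 ^ p :=
    (continuous_fst.dist continuous_snd).rpow_const fun _ ↦ Or.inr hp₀.le
  have hcoupling : μ.map (fun ω ↦ (Y ω, Y' ω)) = ν.prod ν := by
    rw [(indepFun_iff_map_prod_eq_prod_map_map hY.aemeasurable hY'.aemeasurable).1 hindep, hcopy]
  have hmixture : condDistrib Y X μ ∘ₘ μ.map X = ν :=
    condDistrib_comp_map hX.aemeasurable hY.aemeasurable
  have hmoment : Integrable (fun y ↦ dist y y₀ ^ p) ν :=
    (integrable_map_measure ((continuous_id.dist continuous_const).rpow_const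
      fun _ ↦ Or.inr hp₀.le).aestronglyMeasurable hY.aemeasurable).2 hmY
  have hint : Integrable (fun z : 𝕐 × 𝕐 ↦ dist z.1 z.2 ^ p)
      ((condDistrib Y X μ ∘ₘ μ.map X).prod ν) := by
    rw [hmixture]
    exact integrable_dist_rpow_prod hp y₀ hmoment hmoment
  calc ∫ x, Wass (fun y y' => dist y y') p (condDistrib Y X μ x) ν ^ p ∂(μ.map X)
      ≤ ∫ x, ∫ z, dist z.1 z.2 ^ p ∂(condDistrib Y X μ x).prod ν ∂(μ.map X) :=
        -- `x ↦ Wass …` need not be measurable: were it not integrable, the left side would be `0`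
        integral_mono_of_nonneg
          (ae_of_all _ fun _ ↦ Real.rpow_nonneg (Wass_nonneg fun _ _ ↦ dist_nonneg) p)
          hint.integral_comp_prod
          (ae_of_all _ fun _ ↦ Wass_rpow_le_integral_prod (fun _ _ ↦ dist_nonneg) hp₀)
    _ = ∫ z, dist z.1 z.2 ^ p ∂ν.prod ν := by rw [← Measure.integral_comp_prod hint, hmixture]
    _ = ∫ ω, dist (Y ω) (Y' ω) ^ p ∂μ := by
        rw [← hcoupling, integral_map (hY.prodMk hY').aemeasurable hcost.aestronglyMeasurable]
end

section
/- If Y = f(X) almost surely for a measurable function f : 𝕏 → 𝕐, then E_X[W_{d_𝕐,p}(L(Y|X), L(Y))^p] = E[d_𝕐(Y,Y')^p], where Y' is an independent copy of Y. -/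
open MeasureTheory ProbabilityTheory

section Aux

variable {α : Type*} [MeasurableSpace α] [MetricSpace α] [BorelSpace α]

lemma coupling_dirac_integral (p : ℝ) (hp : 0 ≤ p) (a : α) (Q : Measure α)
    (γ : Measure (α × α)) (h1 : γ.map Prod.fst = Measure.dirac a) (h2 : γ.map Prod.snd = Q) :
    ∫ z : α × α, dist z.1 z.2 ^ p ∂γ = ∫ y, dist a y ^ p ∂Q := by
  have hae : ∀ᵐ z : α × α ∂γ, z.1 = a := by
    have h0 : γ (Prod.fst ⁻¹' {a}ᶜ) = 0 := by
      rw [← Measure.map_apply measurable_fst (measurableSet_singleton a).compl, h1]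
      simp
    refine (ae_iff (p := fun z : α × α => z.1 = a)).2 ?_
    exact h0
  have h₁ : ∫ z : α × α, dist z.1 z.2 ^ p ∂γ = ∫ z : α × α, dist a z.2 ^ p ∂γ := by
    refine integral_congr_ae ?_
    filter_upwards [hae] with z hz
    rw [hz]
  have hcont : Continuous fun y : α => dist a y ^ p :=
    (Real.continuous_rpow_const hp).comp (continuous_const.dist continuous_id)
  have h₂ : ∫ z : α × α, dist a z.2 ^ p ∂γ = ∫ y, dist a y ^ p ∂(γ.map Prod.snd) := by
    rw [integral_map measurable_snd.aemeasurable hcont.aestronglyMeasurable]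
  rw [h₁, h₂, h2]

lemma wass_dirac (p : ℝ) (hp : 0 ≤ p) (a : α) (Q : Measure α) [IsProbabilityMeasure Q] :
    Wass (fun y y' => dist y y') p (Measure.dirac a) Q
      = (∫ y, dist a y ^ p ∂Q) ^ (1 / p) := by
  have himg : ((fun γ : Measure (α × α) => (∫ z, dist z.1 z.2 ^ p ∂γ) ^ (1 / p)) ''
      {γ | γ.map Prod.fst = Measure.dirac a ∧ γ.map Prod.snd = Q})
      = {(∫ y, dist a y ^ p ∂Q) ^ (1 / p)} := by
    refine Set.eq_singleton_iff_unique_mem.2 ⟨?_, ?_⟩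
    · refine ⟨(Measure.dirac a).prod Q, ⟨by simp, by simp⟩, ?_⟩
      exact congrArg (· ^ (1 / p)) (coupling_dirac_integral p hp a Q _ (by simp) (by simp))
    · rintro x ⟨γ, ⟨hγ1, hγ2⟩, rfl⟩
      exact congrArg (· ^ (1 / p)) (coupling_dirac_integral p hp a Q γ hγ1 hγ2)
  rw [Wass, himg, csInf_singleton]

end Aux

theorem stmt5 {Ω 𝕏 𝕐 : Type*} [MeasurableSpace Ω] [MeasurableSpace 𝕏]
    [MetricSpace 𝕐] [PolishSpace 𝕐] [MeasurableSpace 𝕐] [BorelSpace 𝕐] [Nonempty 𝕐]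
    (μ : Measure Ω) [IsProbabilityMeasure μ]
    (X : Ω → 𝕏) (Y : Ω → 𝕐) (hX : Measurable X) (hY : Measurable Y)
    (p : ℝ) (hp : 1 ≤ p) (y₀ : 𝕐)
    (hmY : Integrable (fun ω => dist (Y ω) y₀ ^ p) μ)
    (Y' : Ω → 𝕐) (hY' : Measurable Y')
    (hindep : IndepFun Y Y' μ) (hcopy : μ.map Y' = μ.map Y)
    (f : 𝕏 → 𝕐) (hf : Measurable f) (hfX : ∀ᵐ ω ∂μ, Y ω = f (X ω)) :
    (∫ x, Wass (fun y y' => dist y y') p (condDistrib Y X μ x) (μ.map Y) ^ p ∂(μ.map X))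
      = ∫ ω, dist (Y ω) (Y' ω) ^ p ∂μ := by
  have hp0 : (0 : ℝ) < p := lt_of_lt_of_le one_pos hp
  have hp0' : (0 : ℝ) ≤ p := hp0.le
  set Q := μ.map Y with hQdef
  haveI : IsProbabilityMeasure Q := Measure.isProbabilityMeasure_map hY.aemeasurable
  haveI : IsProbabilityMeasure (μ.map X) := Measure.isProbabilityMeasure_map hX.aemeasurable
  -- the joint law is the compProd with the deterministic kernel
  have hjoint : μ.map (fun ω => (X ω, Y ω)) = μ.map X ⊗ₘ Kernel.deterministic f hf := by
    have hg : Measurable fun x : 𝕏 => (x, f x) := measurable_id.prodMk hf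
    have h1 : μ.map X ⊗ₘ Kernel.deterministic f hf = (μ.map X).map (fun x => (x, f x)) := by
      ext s hs
      rw [Measure.compProd_apply hs, Measure.map_apply hg hs]
      have : ∀ x, Kernel.deterministic f hf x (Prod.mk x ⁻¹' s)
          = Set.indicator ((fun x => (x, f x)) ⁻¹' s) (1 : 𝕏 → ENNReal) x := by
        intro x
        rw [Kernel.deterministic_apply' hf _ (measurable_prodMk_left hs)]
        by_cases hx : (x, f x) ∈ s <;> simp [Set.indicator_apply, hx]
      simp_rw [this]
      rw [lintegral_indicator_one (hg hs)]
    have h2 : μ.map (fun ω => (X ω, Y ω)) = (μ.map X).map (fun x => (x, f x)) := by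
      rw [Measure.map_map hg hX]
      refine Measure.map_congr ?_
      filter_upwards [hfX] with ω hω
      simp [Function.comp, hω]
    rw [h1, h2]
  have hdet : ∀ᵐ x ∂(μ.map X), Kernel.deterministic f hf x = condDistrib Y X μ x :=
    (condDistrib_ae_eq_of_measure_eq_compProd_of_measurable hX hY hjoint).mono fun x hx => hx.symm
  -- pointwise identification of the Wasserstein term
  have key : ∀ᵐ x ∂(μ.map X),
      Wass (fun y y' => dist y y') p (condDistrib Y X μ x) Q ^ p
        = ∫ y, dist (f x) y ^ p ∂Q := by
    filter_upwards [hdet] with x hx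
    rw [← hx, Kernel.deterministic_apply, wass_dirac p hp0' (f x) Q,
      ← Real.rpow_mul (integral_nonneg fun y => Real.rpow_nonneg dist_nonneg p),
      one_div, inv_mul_cancel₀ hp0.ne', Real.rpow_one]
  have hcont2 : Continuous fun z : 𝕐 × 𝕐 => dist z.1 z.2 ^ p :=
    (Real.continuous_rpow_const hp0').comp continuous_dist
  -- LHS
  have hL : (∫ x, Wass (fun y y' => dist y y') p (condDistrib Y X μ x) Q ^ p ∂(μ.map X))
      = ∫ y', ∫ y, dist y' y ^ p ∂Q ∂Q := by
    rw [integral_congr_ae key]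
    have hF : AEStronglyMeasurable (fun y' : 𝕐 => ∫ y, dist y' y ^ p ∂Q) ((μ.map X).map f) := by
      exact (hcont2.stronglyMeasurable.integral_prod_right' (ν := Q)).aestronglyMeasurable
    have : (∫ x, ∫ y, dist (f x) y ^ p ∂Q ∂(μ.map X))
        = ∫ y', ∫ y, dist y' y ^ p ∂Q ∂((μ.map X).map f) :=
      (integral_map hf.aemeasurable hF).symm
    rw [this, Measure.map_map hf hX]
    congr 1
    rw [hQdef]
    refine Measure.map_congr ?_
    filter_upwards [hfX] with ω hω
    simp [Function.comp, hω.symm]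
  -- RHS
  have hprod : μ.map (fun ω => (Y ω, Y' ω)) = Q.prod Q := by
    rw [(indepFun_iff_map_prod_eq_prod_map_map hY.aemeasurable hY'.aemeasurable).mp hindep, hcopy]
  -- integrability of the cost on the product
  have hQcont : Continuous fun y : 𝕐 => dist y y₀ ^ p :=
    (Real.continuous_rpow_const hp0').comp (continuous_id.dist continuous_const)
  have hQint : Integrable (fun y => dist y y₀ ^ p) Q := by
    rw [hQdef, integrable_map_measure
      (g := fun y => dist y y₀ ^ p) hQcont.aestronglyMeasurable hY.aemeasurable]
    exact hmY
  have hfst : Integrable (fun z : 𝕐 × 𝕐 => dist z.1 y₀ ^ p) (Q.prod Q) := by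
    have hm : (Q.prod Q).map Prod.fst = Q := by simp
    have := (integrable_map_measure (f := (Prod.fst : 𝕐 × 𝕐 → 𝕐))
      (μ := Q.prod Q) (g := fun y => dist y y₀ ^ p)
      (by rw [hm]; exact hQcont.aestronglyMeasurable) measurable_fst.aemeasurable)
    rw [hm] at this
    exact this.mp hQint
  have hsnd : Integrable (fun z : 𝕐 × 𝕐 => dist z.2 y₀ ^ p) (Q.prod Q) := by
    have hm : (Q.prod Q).map Prod.snd = Q := by simp
    have := (integrable_map_measure (f := (Prod.snd : 𝕐 × 𝕐 → 𝕐))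
      (μ := Q.prod Q) (g := fun y => dist y y₀ ^ p)
      (by rw [hm]; exact hQcont.aestronglyMeasurable) measurable_snd.aemeasurable)
    rw [hm] at this
    exact this.mp hQint
  have hbound : ∀ z : 𝕐 × 𝕐, ‖dist z.1 z.2 ^ p‖
      ≤ 2 ^ p * (dist z.1 y₀ ^ p + dist z.2 y₀ ^ p) := by
    intro z
    set s := dist z.1 y₀ with hs
    set t := dist z.2 y₀ with ht
    have hs0 : (0:ℝ) ≤ s := dist_nonneg
    have ht0 : (0:ℝ) ≤ t := dist_nonneg
    rw [Real.norm_of_nonneg (Real.rpow_nonneg dist_nonneg p)]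
    have h1 : dist z.1 z.2 ≤ s + t := by
      rw [hs, ht]
      exact (dist_triangle z.1 y₀ z.2).trans (by rw [dist_comm y₀ z.2])
    have h2 : dist z.1 z.2 ^ p ≤ (s + t) ^ p :=
      Real.rpow_le_rpow dist_nonneg h1 hp0'
    have h3 : s + t ≤ 2 * max s t := by
      rcases le_total s t with h | h
      · calc s + t ≤ t + t := by linarith
          _ = 2 * t := by ring
          _ ≤ 2 * max s t := by nlinarith [le_max_right s t]
      · calc s + t ≤ s + s := by linarith
          _ = 2 * s := by ring
          _ ≤ 2 * max s t := by nlinarith [le_max_left s t]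
    have h4 : (s + t) ^ p ≤ (2 * max s t) ^ p :=
      Real.rpow_le_rpow (by linarith) h3 hp0'
    have h5 : (2 * max s t) ^ p = 2 ^ p * max s t ^ p :=
      Real.mul_rpow (by norm_num) (le_max_of_le_left hs0)
    have h6 : max s t ^ p ≤ s ^ p + t ^ p := by
      rcases le_total s t with h | h
      · rw [max_eq_right h]
        have := Real.rpow_nonneg hs0 p
        linarith
      · rw [max_eq_left h]
        have := Real.rpow_nonneg ht0 p
        linarith
    have h7 : 2 ^ p * max s t ^ p ≤ 2 ^ p * (s ^ p + t ^ p) := by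
      have h2p : (0:ℝ) ≤ 2 ^ p := Real.rpow_nonneg (by norm_num) p
      nlinarith
    calc dist z.1 z.2 ^ p ≤ (s + t) ^ p := h2
      _ ≤ (2 * max s t) ^ p := h4
      _ = 2 ^ p * max s t ^ p := h5
      _ ≤ 2 ^ p * (s ^ p + t ^ p) := h7
  have hint : Integrable (fun z : 𝕐 × 𝕐 => dist z.1 z.2 ^ p) (Q.prod Q) := by
    refine Integrable.mono' ((hfst.add hsnd).const_mul (2 ^ p))
      hcont2.aestronglyMeasurable ?_
    exact Filter.Eventually.of_forall hbound
  have hR : (∫ ω, dist (Y ω) (Y' ω) ^ p ∂μ) = ∫ y', ∫ y, dist y' y ^ p ∂Q ∂Q := by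
    have h1 : (∫ ω, dist (Y ω) (Y' ω) ^ p ∂μ)
        = ∫ z : 𝕐 × 𝕐, dist z.1 z.2 ^ p ∂(μ.map (fun ω => (Y ω, Y' ω))) := by
      rw [integral_map (hY.aemeasurable.prodMk hY'.aemeasurable)
        (by rw [hprod]; exact hcont2.aestronglyMeasurable)]
    rw [h1, hprod, integral_prod _ hint]
  rw [hL, hR]
end

section
/- If f : 𝕏 → 𝕏 is a measurable bijection and g : 𝕐 → 𝕐 is an isometry of (𝕐, d_𝕐), then E_{f(X)}[W_{d_𝕐,p}(L(g(Y)|f(X)), L(g(Y)))^p] = E_X[W_{d_𝕐,p}(L(Y|X), L(Y))^p]. -/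
/-!
Conditioning on `f ∘ X` instead of `X` only relabels the conditional laws: `L(Y | f(X))` at `f x`
is `L(Y | X)` at `x`. Replacing `Y` by `g ∘ Y` pushes every conditional law and the marginal forward
by `g`, and since `g × g` maps the couplings of two laws bijectively onto the couplings of their
images without changing the cost, `W_p` is invariant under `g`. A change of variables `x ↦ f x`
concludes.
-/

open MeasureTheory ProbabilityTheory

def couplingCosts {α : Type*} [MeasurableSpace α] (d : α → α → ℝ) (p : ℝ) (P Q : Measure α) :
    Set ℝ :=
  (fun γ : Measure (α × α) => (∫ z, d z.1 z.2 ^ p ∂γ) ^ (1 / p)) ''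
    {γ | γ.map Prod.fst = P ∧ γ.map Prod.snd = Q}

lemma Wass_eq_sInf_couplingCosts {α : Type*} [MeasurableSpace α] (d : α → α → ℝ) (p : ℝ)
    (P Q : Measure α) : Wass d p P Q = sInf (couplingCosts d p P Q) :=
  rfl

section Isometry

variable {α β : Type*} [PseudoMetricSpace α] [MeasurableSpace α]
  [PseudoMetricSpace β] [MeasurableSpace β]

lemma couplingCosts_subset_map (e : α ≃ᵐ β) (he : Isometry e) (p : ℝ) (P Q : Measure α) :
    couplingCosts (fun y y' => dist y y') p P Q ⊆
      couplingCosts (fun y y' => dist y y') p (P.map e) (Q.map e) := by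
  rintro _ ⟨γ, ⟨hP, hQ⟩, rfl⟩
  refine ⟨γ.map (e.prodCongr e), ⟨?_, ?_⟩, ?_⟩
  · rw [Measure.map_map measurable_fst (e.prodCongr e).measurable, ← hP,
      Measure.map_map e.measurable measurable_fst]
    rfl
  · rw [Measure.map_map measurable_snd (e.prodCongr e).measurable, ← hQ,
      Measure.map_map e.measurable measurable_snd]
    rfl
  · change (∫ z, dist z.1 z.2 ^ p ∂γ.map (e.prodCongr e)) ^ (1 / p) = _
    rw [integral_map_equiv]
    congr 2 with z
    exact congrArg (· ^ p) (he.dist_eq z.1 z.2)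

lemma Wass_map_of_isometry (e : α ≃ᵐ β) (he : Isometry e) (p : ℝ) (P Q : Measure α) :
    Wass (fun y y' => dist y y') p (P.map e) (Q.map e) = Wass (fun y y' => dist y y') p P Q := by
  have he_symm : Isometry e.symm := fun a b => by
    simpa using (he.edist_eq (e.symm a) (e.symm b)).symm
  have h := couplingCosts_subset_map e.symm he_symm p (P.map e) (Q.map e)
  rw [Measure.map_map e.symm.measurable e.measurable,
    Measure.map_map e.symm.measurable e.measurable, e.symm_comp_self, Measure.map_id,
    Measure.map_id] at h
  rw [Wass_eq_sInf_couplingCosts, Wass_eq_sInf_couplingCosts,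
    h.antisymm (couplingCosts_subset_map e he p P Q)]

end Isometry

namespace MeasureTheory.Measure

lemma map_prodMap_compProd {α β γ : Type*} [MeasurableSpace α] [MeasurableSpace β]
    [MeasurableSpace γ] (e : α ≃ᵐ β) (μ : Measure α) [SFinite μ] (κ : Kernel α γ)
    [IsSFiniteKernel κ] :
    (μ ⊗ₘ κ).map (Prod.map e id) = μ.map e ⊗ₘ κ.comap e.symm e.symm.measurable := by
  ext s hs
  rw [map_apply (e.measurable.prodMap measurable_id) hs,
    compProd_apply (e.measurable.prodMap measurable_id hs), compProd_apply hs,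
    lintegral_map_equiv]
  simp only [Kernel.comap_apply, MeasurableEquiv.symm_apply_apply]
  rfl

end MeasureTheory.Measure

namespace ProbabilityTheory

variable {Ω β γ 𝕐 : Type*} [MeasurableSpace Ω] [MeasurableSpace β] [MeasurableSpace γ]
  [MeasurableSpace 𝕐] [StandardBorelSpace 𝕐] [Nonempty 𝕐]
  {μ : Measure Ω} [IsFiniteMeasure μ] {X : Ω → β} {Y : Ω → 𝕐}

lemma condDistrib_measurableEquiv_comp_ae_eq (f : β ≃ᵐ γ) (hX : AEMeasurable X μ)
    (hY : AEMeasurable Y μ) :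
    condDistrib Y (f ∘ X) μ =ᵐ[μ.map (f ∘ X)]
      (condDistrib Y X μ).comap f.symm f.symm.measurable := by
  refine condDistrib_ae_eq_of_measure_eq_compProd _ hY ?_
  calc μ.map (fun ω => ((f ∘ X) ω, Y ω))
      = (μ.map (fun ω => (X ω, Y ω))).map (Prod.map f id) := by
        rw [AEMeasurable.map_map_of_aemeasurable
          (f.measurable.prodMap measurable_id).aemeasurable (hX.prodMk hY)]
        rfl
    _ = (μ.map X ⊗ₘ condDistrib Y X μ).map (Prod.map f id) := by
        rw [compProd_map_condDistrib hY]
    _ = μ.map (f ∘ X) ⊗ₘ (condDistrib Y X μ).comap f.symm f.symm.measurable := by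
        rw [Measure.map_prodMap_compProd,
          AEMeasurable.map_map_of_aemeasurable f.measurable.aemeasurable hX]

lemma condDistrib_measurableEquiv_comp_apply_ae (f : β ≃ᵐ γ) (hX : AEMeasurable X μ)
    (hY : AEMeasurable Y μ) :
    ∀ᵐ x ∂μ.map X, condDistrib Y (f ∘ X) μ (f x) = condDistrib Y X μ x := by
  have h := condDistrib_measurableEquiv_comp_ae_eq f hX hY
  rw [← AEMeasurable.map_map_of_aemeasurable f.measurable.aemeasurable hX] at h
  filter_upwards [ae_of_ae_map f.measurable.aemeasurable h] with x hx
  rw [hx, Kernel.comap_apply, f.symm_apply_apply]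

end ProbabilityTheory

theorem stmt9_general {Ω 𝕏 𝕐 : Type*} [MeasurableSpace Ω] [MeasurableSpace 𝕏]
    [MetricSpace 𝕐] [PolishSpace 𝕐] [MeasurableSpace 𝕐] [BorelSpace 𝕐] [Nonempty 𝕐]
    (μ : Measure Ω) [IsProbabilityMeasure μ]
    (X : Ω → 𝕏) (Y : Ω → 𝕐) (hX : Measurable X) (hY : Measurable Y)
    (p : ℝ)
    (f : 𝕏 ≃ᵐ 𝕏) (g : 𝕐 → 𝕐) (hg : Isometry g) (hgb : Function.Bijective g) :
    (∫ x, Wass (fun y y' => dist y y') p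
        (condDistrib (fun ω => g (Y ω)) (fun ω => f (X ω)) μ x)
        (μ.map (fun ω => g (Y ω))) ^ p ∂(μ.map (fun ω => f (X ω))))
      = ∫ x, Wass (fun y y' => dist y y') p (condDistrib Y X μ x) (μ.map Y) ^ p
          ∂(μ.map X) := by
  let e : 𝕐 ≃ᵐ 𝕐 :=
    (IsometryEquiv.mk (Equiv.ofBijective g hgb) hg).toHomeomorph.toMeasurableEquiv
  have hcond : ∀ᵐ x ∂μ.map X,
      condDistrib (e ∘ Y) (f ∘ X) μ (f x) = (condDistrib Y X μ x).map e := by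
    filter_upwards [condDistrib_measurableEquiv_comp_apply_ae f hX.aemeasurable
        (e.measurable.comp hY).aemeasurable,
      condDistrib_comp X hY.aemeasurable e.measurable] with x hf he
    rw [hf, he, Kernel.map_apply _ e.measurable]
  change ∫ x, Wass _ p (condDistrib (e ∘ Y) (f ∘ X) μ x) (μ.map (e ∘ Y)) ^ p ∂(μ.map (f ∘ X)) = _
  rw [← Measure.map_map f.measurable hX, integral_map_equiv, ← Measure.map_map e.measurable hY]
  refine integral_congr_ae ?_
  filter_upwards [hcond] with x hx
  rw [hx, Wass_map_of_isometry e hg]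

theorem stmt9 {Ω 𝕏 𝕐 : Type*} [MeasurableSpace Ω] [MeasurableSpace 𝕏]
    [MetricSpace 𝕐] [PolishSpace 𝕐] [MeasurableSpace 𝕐] [BorelSpace 𝕐] [Nonempty 𝕐]
    (μ : Measure Ω) [IsProbabilityMeasure μ]
    (X : Ω → 𝕏) (Y : Ω → 𝕐) (hX : Measurable X) (hY : Measurable Y)
    (p : ℝ) (hp : 1 ≤ p) (y₀ : 𝕐)
    (hmY : Integrable (fun ω => dist (Y ω) y₀ ^ p) μ)
    (f : 𝕏 ≃ᵐ 𝕏) (g : 𝕐 → 𝕐) (hg : Isometry g) (hgb : Function.Bijective g) :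
    (∫ x, Wass (fun y y' => dist y y') p
        (condDistrib (fun ω => g (Y ω)) (fun ω => f (X ω)) μ x)
        (μ.map (fun ω => g (Y ω))) ^ p ∂(μ.map (fun ω => f (X ω))))
      = ∫ x, Wass (fun y y' => dist y y') p (condDistrib Y X μ x) (μ.map Y) ^ p
          ∂(μ.map X) :=
  stmt9_general μ X Y hX hY p f g hg hgb
end

section
/- Let (X,Y) be a centered bivariate Gaussian vector with unit variances and correlation ρ ∈ [−1,1], and let Y' be an independent copy of Y. Then E_X[W₂(L(Y|X), L(Y))²] = 2(1 − sqrt(1−ρ²)) and E[(Y−Y')²] = 2, hence the normalized conditional Wasserstein index of order 2, I_{|•}(X,Y) = E_X[W₂(L(Y|X), L(Y))²] / E[(Y−Y')²], equals 1 − sqrt(1−ρ²). -/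
open MeasureTheory ProbabilityTheory

open Real
open scoped NNReal ENNReal

noncomputable def phi (x : ℝ) : ℝ := (Real.sqrt (2 * π))⁻¹ * Real.exp (-x ^ 2 / 2)

lemma phi_nonneg (x : ℝ) : 0 ≤ phi x := by
  unfold phi; positivity

lemma phi_measurable : Measurable phi := by
  unfold phi; fun_prop

lemma gaussianReal_std : gaussianReal 0 1 = (volume : Measure ℝ).withDensity (fun x => ENNReal.ofReal (phi x)) := by
  rw [gaussianReal_of_var_ne_zero _ one_ne_zero]
  congr 1
  ext x
  simp [gaussianPDF, gaussianPDFReal, phi]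

lemma integrable_pow_mul_exp (n : ℕ) : Integrable (fun x : ℝ => x ^ n * Real.exp (-x^2/2)) := by
  have h := integrable_rpow_mul_exp_neg_mul_sq (b := (1:ℝ)/2) (by norm_num) (s := n)
    (lt_of_lt_of_le neg_one_lt_zero (Nat.cast_nonneg n))
  refine h.congr (Filter.Eventually.of_forall fun x => ?_)
  simp only [Real.rpow_natCast]
  ring_nf

lemma integral_odd_exp : ∫ x : ℝ, x * Real.exp (-x^2/2) = 0 := by
  have hmap : ∫ x : ℝ, x * Real.exp (-x^2/2) = ∫ x : ℝ, (-x) * Real.exp (-(-x)^2/2) := by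
    conv_lhs => rw [← Measure.map_neg_eq_self (volume : Measure ℝ)]
    rw [show (Neg.neg : ℝ → ℝ) = ⇑(MeasurableEquiv.neg ℝ) from rfl,
      integral_map_equiv (MeasurableEquiv.neg ℝ)]
  have h2 : ∫ x : ℝ, (-x) * Real.exp (-(-x)^2/2) = - ∫ x : ℝ, x * Real.exp (-x^2/2) := by
    rw [← integral_neg]
    congr 1; ext x; ring_nf
  linarith [hmap, h2]

lemma integral_sq_exp : ∫ x : ℝ, x ^ 2 * Real.exp (-x^2/2) = Real.sqrt (2 * π) := by
  have habs : (fun x : ℝ => x ^ 2 * Real.exp (-x^2/2)) = fun x => |x| ^ 2 * Real.exp (-|x|^2/2) := by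
    ext x; rw [sq_abs]
  rw [habs, integral_comp_abs (f := fun x => x ^ 2 * Real.exp (-x^2/2))]
  have h2 : ∫ x in Set.Ioi (0:ℝ), x ^ 2 * Real.exp (-x^2/2)
      = ∫ x in Set.Ioi (0:ℝ), x ^ (2:ℝ) * Real.exp (-(1/2) * x ^ (2:ℝ)) := by
    refine setIntegral_congr_fun measurableSet_Ioi (fun x hx => ?_)
    rw [Real.rpow_two]
    ring_nf
  rw [h2, integral_rpow_mul_exp_neg_mul_rpow (by norm_num) (by norm_num) (by norm_num)]
  have hg : Real.Gamma ((2+1)/2) = Real.sqrt π / 2 := by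
    have h12 : ((2:ℝ)+1)/2 = 1/2 + 1 := by norm_num
    rw [h12, Real.Gamma_add_one (by norm_num), Real.Gamma_one_half_eq]
    ring
  rw [hg]
  rw [show (-((2:ℝ)+1)/2) = (-(3/2) : ℝ) by norm_num]
  have hb : ((1:ℝ)/2) ^ (-(3/2) : ℝ) = 2 * Real.sqrt 2 := by
    rw [one_div, Real.inv_rpow (by norm_num), ← Real.rpow_neg (by norm_num), neg_neg,
      show (3/2:ℝ) = 1 + 1/2 by norm_num, Real.rpow_add (by norm_num), Real.rpow_one,
      ← Real.sqrt_eq_rpow]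
  rw [hb, Real.sqrt_mul (by norm_num : (0:ℝ) ≤ 2)]
  ring

-- integrals against the standard gaussian
lemma integral_std (g : ℝ → ℝ) : ∫ x, g x ∂(gaussianReal 0 1) = ∫ x, phi x * g x := by
  rw [gaussianReal_std]
  have : (fun x => ENNReal.ofReal (phi x)) = (fun x => ((fun y => (phi y).toNNReal) x : ℝ≥0∞)) := rfl
  rw [this, integral_withDensity_eq_integral_smul (phi_measurable.real_toNNReal) g]
  congr 1; ext x
  rw [NNReal.smul_def, smul_eq_mul, Real.coe_toNNReal _ (phi_nonneg x)]

lemma integrable_std (g : ℝ → ℝ) (hg : Integrable (fun x => phi x * g x)) :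
    Integrable g (gaussianReal 0 1) := by
  rw [gaussianReal_std]
  have : (fun x => ENNReal.ofReal (phi x)) = (fun x => ((fun y => (phi y).toNNReal) x : ℝ≥0∞)) := rfl
  rw [this, integrable_withDensity_iff_integrable_smul (phi_measurable.real_toNNReal)]
  refine hg.congr (Filter.Eventually.of_forall fun x => ?_)
  simp only [NNReal.smul_def, smul_eq_mul, Real.coe_toNNReal _ (phi_nonneg x)]

lemma std_integrable_id : Integrable (fun x : ℝ => x) (gaussianReal 0 1) := by
  refine integrable_std _ ?_
  have h := (integrable_pow_mul_exp 1).const_mul (Real.sqrt (2 * π))⁻¹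
  refine h.congr (Filter.Eventually.of_forall fun x => ?_)
  unfold phi; ring

lemma std_integrable_sq : Integrable (fun x : ℝ => x ^ 2) (gaussianReal 0 1) := by
  refine integrable_std _ ?_
  have h := (integrable_pow_mul_exp 2).const_mul (Real.sqrt (2 * π))⁻¹
  refine h.congr (Filter.Eventually.of_forall fun x => ?_)
  unfold phi; ring

lemma std_integral_id : ∫ x, x ∂(gaussianReal 0 1) = 0 := by
  rw [integral_std]
  have : ∫ x, phi x * x = (Real.sqrt (2 * π))⁻¹ * ∫ x : ℝ, x * Real.exp (-x^2/2) := by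
    rw [← integral_const_mul]
    congr 1; ext x; unfold phi; ring
  rw [this, integral_odd_exp, mul_zero]

lemma std_integral_sq : ∫ x, x ^ 2 ∂(gaussianReal 0 1) = 1 := by
  rw [integral_std]
  have : ∫ x, phi x * x ^ 2 = (Real.sqrt (2 * π))⁻¹ * ∫ x : ℝ, x ^ 2 * Real.exp (-x^2/2) := by
    rw [← integral_const_mul]
    congr 1; ext x; unfold phi; ring
  rw [this, integral_sq_exp, inv_mul_cancel₀]
  positivity

/-- Any gaussian is an affine image of the standard gaussian. -/
lemma gaussianReal_eq_map (m : ℝ) (u : ℝ≥0) :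
    (gaussianReal 0 1).map (fun x => Real.sqrt u * x + m) = gaussianReal m u := by
  have hcomp : (fun x : ℝ => Real.sqrt u * x + m) = (fun y => y + m) ∘ (fun x => Real.sqrt u * x) := rfl
  rw [hcomp, ← Measure.map_map (measurable_add_const m) (measurable_const_mul _)]
  have h1 : (gaussianReal 0 1).map (fun x => Real.sqrt u * x) = gaussianReal 0 u := by
    have := gaussianReal_map_const_mul (μ := 0) (v := 1) (Real.sqrt u)
    simp only [mul_zero] at this
    convert this using 2
    ext
    simp [Real.sq_sqrt u.2]
  rw [show (fun x : ℝ => Real.sqrt u * x) = (Real.sqrt u * ·) from rfl, h1,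
    gaussianReal_map_add_const m, zero_add]

lemma gauss_integrable_sub (m : ℝ) (u : ℝ≥0) :
    Integrable (fun y => y - m) (gaussianReal m u) := by
  rw [← gaussianReal_eq_map m u,
    integrable_map_measure (by fun_prop : Measurable fun y : ℝ => y - m).aestronglyMeasurable
      (by fun_prop : Measurable fun x : ℝ => Real.sqrt u * x + m).aemeasurable]
  have : ((fun y => y - m) ∘ (fun x : ℝ => Real.sqrt u * x + m)) = fun x => Real.sqrt u * x := by
    ext x; simp [Function.comp]
  rw [this]
  exact std_integrable_id.const_mul _

lemma gauss_integrable_sub_sq (m : ℝ) (u : ℝ≥0) :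
    Integrable (fun y => (y - m) ^ 2) (gaussianReal m u) := by
  rw [← gaussianReal_eq_map m u,
    integrable_map_measure (by fun_prop : Measurable fun y : ℝ => (y - m) ^ 2).aestronglyMeasurable
      (by fun_prop : Measurable fun x : ℝ => Real.sqrt u * x + m).aemeasurable]
  have : ((fun y => (y - m) ^ 2) ∘ (fun x : ℝ => Real.sqrt u * x + m))
      = fun x => (u : ℝ) * x ^ 2 := by
    ext x; simp only [Function.comp, add_sub_cancel_right]
    rw [mul_pow, Real.sq_sqrt u.coe_nonneg]
  rw [this]
  exact std_integrable_sq.const_mul _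

lemma gauss_integral_sub (m : ℝ) (u : ℝ≥0) :
    ∫ y, (y - m) ∂(gaussianReal m u) = 0 := by
  rw [← gaussianReal_eq_map m u,
    integral_map (by fun_prop : Measurable fun x : ℝ => Real.sqrt u * x + m).aemeasurable
      (by fun_prop : Measurable fun y : ℝ => y - m).aestronglyMeasurable]
  simp only [add_sub_cancel_right]
  rw [integral_const_mul, std_integral_id, mul_zero]

lemma gauss_integral_sub_sq (m : ℝ) (u : ℝ≥0) :
    ∫ y, (y - m) ^ 2 ∂(gaussianReal m u) = (u : ℝ) := by
  rw [← gaussianReal_eq_map m u,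
    integral_map (by fun_prop : Measurable fun x : ℝ => Real.sqrt u * x + m).aemeasurable
      (by fun_prop : Measurable fun y : ℝ => (y - m) ^ 2).aestronglyMeasurable]
  simp only [add_sub_cancel_right]
  have : (fun x : ℝ => (Real.sqrt u * x) ^ 2) = fun x => (u : ℝ) * x ^ 2 := by
    ext x; rw [mul_pow, Real.sq_sqrt u.coe_nonneg]
  rw [this, integral_const_mul, std_integral_sq, mul_one]

/-- The cross-term bound: for any coupling of two Gaussians, the covariance-type integral is
at most the product of the standard deviations. -/
lemma cross_le (a b : ℝ) (v w : ℝ≥0) (γ : Measure (ℝ × ℝ))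
    (h1 : γ.map Prod.fst = gaussianReal a v) (h2 : γ.map Prod.snd = gaussianReal b w)
    (Is2 : Integrable (fun z : ℝ × ℝ => (z.1 - a) ^ 2) γ)
    (It2 : Integrable (fun z : ℝ × ℝ => (z.2 - b) ^ 2) γ)
    (Ic : Integrable (fun z : ℝ × ℝ => (z.1 - a) * (z.2 - b)) γ)
    (es2 : ∫ z, (z.1 - a) ^ 2 ∂γ = (v : ℝ))
    (et2 : ∫ z, (z.2 - b) ^ 2 ∂γ = (w : ℝ)) :
    ∫ z, (z.1 - a) * (z.2 - b) ∂γ ≤ Real.sqrt v * Real.sqrt w := by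
  have ht : Filter.Tendsto (fun ε : ℝ => Real.sqrt (v + ε) * Real.sqrt (w + ε))
      (nhdsWithin 0 (Set.Ioi 0)) (nhds (Real.sqrt v * Real.sqrt w)) := by
    have hc : Continuous (fun ε : ℝ => Real.sqrt (v + ε) * Real.sqrt (w + ε)) := by fun_prop
    have := (hc.tendsto 0).mono_left (nhdsWithin_le_nhds (s := Set.Ioi 0))
    simpa using this
  refine ge_of_tendsto ht ?_
  filter_upwards [self_mem_nhdsWithin] with ε hε
  have hε' : (0:ℝ) < ε := hε
  set sv := Real.sqrt ((v:ℝ) + ε) with hsv_def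
  set sw := Real.sqrt ((w:ℝ) + ε) with hsw_def
  have hv' : (0:ℝ) < (v:ℝ) + ε := by positivity
  have hw' : (0:ℝ) < (w:ℝ) + ε := by positivity
  have hsv : sv ^ 2 = (v:ℝ) + ε := Real.sq_sqrt hv'.le
  have hsw : sw ^ 2 = (w:ℝ) + ε := Real.sq_sqrt hw'.le
  have hsv0 : 0 < sv := Real.sqrt_pos.mpr hv'
  have hsw0 : 0 < sw := Real.sqrt_pos.mpr hw'
  set lam := sw / sv with hlam_def
  have hlam : 0 < lam := div_pos hsw0 hsv0
  have hpt : ∀ z : ℝ × ℝ, (z.1 - a) * (z.2 - b)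
      ≤ (lam * (z.1 - a) ^ 2 + (z.2 - b) ^ 2 / lam) / 2 := by
    intro z
    set s := z.1 - a
    set t := z.2 - b
    have hexp : lam * s ^ 2 + t ^ 2 / lam = (lam ^ 2 * s ^ 2 + t ^ 2) / lam := by
      field_simp
    rw [hexp, le_div_iff₀ (by norm_num : (0:ℝ) < 2), le_div_iff₀ hlam]
    nlinarith [sq_nonneg (lam * s - t)]
  have hIrhs : Integrable (fun z : ℝ × ℝ =>
      (lam * (z.1 - a) ^ 2 + (z.2 - b) ^ 2 / lam) / 2) γ :=
    ((Is2.const_mul lam).add (It2.div_const lam)).div_const 2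
  have hmono := integral_mono Ic hIrhs hpt
  have hrhs : ∫ z : ℝ × ℝ, (lam * (z.1 - a) ^ 2 + (z.2 - b) ^ 2 / lam) / 2 ∂γ
      = (lam * (v:ℝ) + (w:ℝ) / lam) / 2 := by
    rw [integral_div, integral_add (Is2.const_mul lam) (It2.div_const lam),
      integral_const_mul, integral_div, es2, et2]
  rw [hrhs] at hmono
  refine le_trans hmono ?_
  have e1 : lam * ((v:ℝ) + ε) = sw * sv := by
    rw [hlam_def, ← hsv]; field_simp
  have e2 : ((w:ℝ) + ε) / lam = sv * sw := by
    rw [hlam_def, ← hsw]; field_simp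
  have i1 : lam * (v:ℝ) ≤ lam * ((v:ℝ) + ε) := by
    apply mul_le_mul_of_nonneg_left (by linarith) hlam.le
  have i2 : (w:ℝ) / lam ≤ ((w:ℝ) + ε) / lam := by
    gcongr; linarith
  linarith [e1, e2, i1, i2]

lemma wass_gaussian (a b : ℝ) (v w : ℝ≥0) :
    Wass (fun y y' => dist y y') 2 (gaussianReal a v) (gaussianReal b w)
      = Real.sqrt ((a - b) ^ 2 + (Real.sqrt v - Real.sqrt w) ^ 2) := by
  set T : ℝ := (a - b) ^ 2 + (Real.sqrt v - Real.sqrt w) ^ 2 with hT_def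
  have hT : 0 ≤ T := by positivity
  have hcost : ∀ γ : Measure (ℝ × ℝ),
      ∫ z, (fun y y' => dist y y') z.1 z.2 ^ (2:ℝ) ∂γ = ∫ z, (z.1 - z.2) ^ 2 ∂γ := by
    intro γ
    congr 1
    ext z
    simp only [Real.rpow_two, Real.dist_eq, sq_abs]
  -- The optimal coupling
  set γs : Measure (ℝ × ℝ) :=
    (gaussianReal 0 1).map (fun x => (Real.sqrt v * x + a, Real.sqrt w * x + b)) with hγs_def
  have hγs_meas : Measurable (fun x : ℝ => (Real.sqrt v * x + a, Real.sqrt w * x + b)) := by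
    fun_prop
  have hfst : γs.map Prod.fst = gaussianReal a v := by
    rw [hγs_def, Measure.map_map measurable_fst hγs_meas]
    exact gaussianReal_eq_map a v
  have hsnd : γs.map Prod.snd = gaussianReal b w := by
    rw [hγs_def, Measure.map_map measurable_snd hγs_meas]
    exact gaussianReal_eq_map b w
  have hval : ∫ z, (z.1 - z.2) ^ 2 ∂γs = T := by
    rw [hγs_def, integral_map hγs_meas.aemeasurable
      (by fun_prop : Measurable fun z : ℝ × ℝ => (z.1 - z.2) ^ 2).aestronglyMeasurable]
    have : (fun x : ℝ => ((Real.sqrt v * x + a) - (Real.sqrt w * x + b)) ^ 2)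
        = fun x => (Real.sqrt v - Real.sqrt w) ^ 2 * x ^ 2
            + ((2 * (Real.sqrt v - Real.sqrt w) * (a - b)) * x + (a - b) ^ 2) := by
      ext x; ring
    have IA : Integrable (fun x : ℝ => (Real.sqrt v - Real.sqrt w) ^ 2 * x ^ 2)
        (gaussianReal 0 1) := std_integrable_sq.const_mul _
    have IB : Integrable (fun x : ℝ => (2 * (Real.sqrt v - Real.sqrt w) * (a - b)) * x)
        (gaussianReal 0 1) := std_integrable_id.const_mul _
    have IC : Integrable (fun _ : ℝ => (a - b) ^ 2) (gaussianReal 0 1) := integrable_const _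
    have IBC : Integrable (fun x : ℝ => (2 * (Real.sqrt v - Real.sqrt w) * (a - b)) * x
        + (a - b) ^ 2) (gaussianReal 0 1) := IB.add IC
    rw [this, integral_add IA IBC, integral_add IB IC,
      integral_const_mul, integral_const_mul, std_integral_sq, std_integral_id, integral_const]
    simp [hT_def]
    ring
  -- lower bound for every coupling
  have hlow : ∀ γ : Measure (ℝ × ℝ), γ.map Prod.fst = gaussianReal a v →
      γ.map Prod.snd = gaussianReal b w → T ≤ ∫ z, (z.1 - z.2) ^ 2 ∂γ := by
    intro γ h1 h2
    haveI : IsProbabilityMeasure γ := by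
      constructor
      have huniv := congrArg (fun μ : Measure ℝ => μ Set.univ) h1
      simpa [Measure.map_apply measurable_fst MeasurableSet.univ] using huniv
    have hs_sm : AEStronglyMeasurable (fun y : ℝ => y - a) (γ.map Prod.fst) :=
      (by fun_prop : Measurable fun y : ℝ => y - a).aestronglyMeasurable
    have hs2_sm : AEStronglyMeasurable (fun y : ℝ => (y - a) ^ 2) (γ.map Prod.fst) :=
      (by fun_prop : Measurable fun y : ℝ => (y - a) ^ 2).aestronglyMeasurable
    have ht_sm : AEStronglyMeasurable (fun y : ℝ => y - b) (γ.map Prod.snd) :=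
      (by fun_prop : Measurable fun y : ℝ => y - b).aestronglyMeasurable
    have ht2_sm : AEStronglyMeasurable (fun y : ℝ => (y - b) ^ 2) (γ.map Prod.snd) :=
      (by fun_prop : Measurable fun y : ℝ => (y - b) ^ 2).aestronglyMeasurable
    have Is1 : Integrable (fun z : ℝ × ℝ => z.1 - a) γ := by
      have := gauss_integrable_sub a v
      rw [← h1] at this
      simpa [Function.comp_def] using
        (integrable_map_measure hs_sm measurable_fst.aemeasurable).mp this
    have It1 : Integrable (fun z : ℝ × ℝ => z.2 - b) γ := by
      have := gauss_integrable_sub b w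
      rw [← h2] at this
      simpa [Function.comp_def] using
        (integrable_map_measure ht_sm measurable_snd.aemeasurable).mp this
    have Is2 : Integrable (fun z : ℝ × ℝ => (z.1 - a) ^ 2) γ := by
      have := gauss_integrable_sub_sq a v
      rw [← h1] at this
      simpa [Function.comp_def] using
        (integrable_map_measure hs2_sm measurable_fst.aemeasurable).mp this
    have It2 : Integrable (fun z : ℝ × ℝ => (z.2 - b) ^ 2) γ := by
      have := gauss_integrable_sub_sq b w
      rw [← h2] at this
      simpa [Function.comp_def] using
        (integrable_map_measure ht2_sm measurable_snd.aemeasurable).mp this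
    have es1 : ∫ z, (z.1 - a)  ∂γ = 0 := by
      have h := integral_map (μ := γ) measurable_fst.aemeasurable hs_sm
      rw [h1, gauss_integral_sub a v] at h
      simpa using h.symm
    have et1 : ∫ z, (z.2 - b)  ∂γ = 0 := by
      have h := integral_map (μ := γ) measurable_snd.aemeasurable ht_sm
      rw [h2, gauss_integral_sub b w] at h
      simpa using h.symm
    have es2 : ∫ z, (z.1 - a) ^ 2 ∂γ = (v : ℝ) := by
      have h := integral_map (μ := γ) measurable_fst.aemeasurable hs2_sm
      rw [h1, gauss_integral_sub_sq a v] at h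
      simpa using h.symm
    have et2 : ∫ z, (z.2 - b) ^ 2 ∂γ = (w : ℝ) := by
      have h := integral_map (μ := γ) measurable_snd.aemeasurable ht2_sm
      rw [h2, gauss_integral_sub_sq b w] at h
      simpa using h.symm

    have Ic : Integrable (fun z : ℝ × ℝ => (z.1 - a) * (z.2 - b)) γ := by
      refine Integrable.mono' ((Is2.add It2).div_const 2)
        ((by fun_prop : Measurable fun z : ℝ × ℝ => (z.1 - a) * (z.2 - b)).aestronglyMeasurable)
        (Filter.Eventually.of_forall fun z => ?_)
      rw [Real.norm_eq_abs, abs_mul]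
      simp only [Pi.add_apply]
      nlinarith [sq_nonneg (|z.1 - a| - |z.2 - b|), sq_abs (z.1 - a), sq_abs (z.2 - b),
        abs_nonneg (z.1 - a), abs_nonneg (z.2 - b)]
    have hcb := cross_le a b v w γ h1 h2 Is2 It2 Ic es2 et2
    have hexpand : (fun z : ℝ × ℝ => (z.1 - z.2) ^ 2)
        = fun z => (z.1 - a) ^ 2 + ((z.2 - b) ^ 2 + ((-2 : ℝ) * ((z.1 - a) * (z.2 - b))
            + ((2 * (a - b)) * (z.1 - a) + ((-(2 * (a - b))) * (z.2 - b) + (a - b) ^ 2)))) := by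
      ext z; ring
    have hsum : ∫ z, (z.1 - z.2) ^ 2 ∂γ
        = (v : ℝ) + ((w : ℝ) + ((-2 : ℝ) * (∫ z, (z.1 - a) * (z.2 - b) ∂γ)
            + ((2 * (a - b)) * 0 + ((-(2 * (a - b))) * 0 + (a - b) ^ 2)))) := by
      have J6 : Integrable (fun _ : ℝ × ℝ => (a - b) ^ 2) γ := integrable_const _
      have J5 : Integrable (fun z : ℝ × ℝ => (-(2 * (a - b))) * (z.2 - b)) γ := It1.const_mul _
      have J4 : Integrable (fun z : ℝ × ℝ => (2 * (a - b)) * (z.1 - a)) γ := Is1.const_mul _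
      have J3 : Integrable (fun z : ℝ × ℝ => (-2 : ℝ) * ((z.1 - a) * (z.2 - b))) γ :=
        Ic.const_mul _
      have J56 : Integrable (fun z : ℝ × ℝ => (-(2 * (a - b))) * (z.2 - b) + (a - b) ^ 2) γ :=
        J5.add J6
      have J456 : Integrable (fun z : ℝ × ℝ => (2 * (a - b)) * (z.1 - a)
          + ((-(2 * (a - b))) * (z.2 - b) + (a - b) ^ 2)) γ := J4.add J56
      have J3456 : Integrable (fun z : ℝ × ℝ => (-2 : ℝ) * ((z.1 - a) * (z.2 - b))
          + ((2 * (a - b)) * (z.1 - a) + ((-(2 * (a - b))) * (z.2 - b) + (a - b) ^ 2))) γ :=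
        J3.add J456
      have J23456 : Integrable (fun z : ℝ × ℝ => (z.2 - b) ^ 2
          + ((-2 : ℝ) * ((z.1 - a) * (z.2 - b))
          + ((2 * (a - b)) * (z.1 - a) + ((-(2 * (a - b))) * (z.2 - b) + (a - b) ^ 2)))) γ :=
        It2.add J3456
      rw [hexpand, integral_add Is2 J23456, integral_add It2 J3456, integral_add J3 J456,
        integral_add J4 J56, integral_add J5 J6,
        integral_const_mul, integral_const_mul, integral_const_mul,
        es2, et2, es1, et1, integral_const]
      simp
    rw [hsum]
    have hv2 : Real.sqrt v ^ 2 = (v : ℝ) := Real.sq_sqrt v.coe_nonneg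
    have hw2 : Real.sqrt w ^ 2 = (w : ℝ) := Real.sq_sqrt w.coe_nonneg
    rw [hT_def]
    nlinarith [hcb, hv2, hw2]
  -- conclude
  unfold Wass
  apply le_antisymm
  · apply csInf_le
    · refine ⟨0, fun r hr => ?_⟩
      obtain ⟨γ, _, rfl⟩ := hr
      positivity
    · exact ⟨γs, ⟨hfst, hsnd⟩, by
        simp only
        rw [show ((1:ℝ)/(2:ℝ)) = (1/2 : ℝ) by norm_num, hcost γs, hval, ← Real.sqrt_eq_rpow]⟩
  · apply le_csInf
    · exact ⟨_, ⟨γs, ⟨hfst, hsnd⟩, rfl⟩⟩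
    · rintro r ⟨γ, ⟨h1, h2⟩, rfl⟩
      simp only
      rw [hcost γ, ← Real.sqrt_eq_rpow]
      exact Real.sqrt_le_sqrt (hlow γ h1 h2)

theorem stmt13 (ρ : ℝ) (hρ : ρ ∈ Set.Icc (-1 : ℝ) 1) :
    (∫ x, Wass (fun y y' => dist y y') 2
        (gaussianReal (ρ * x) ((1 - ρ ^ 2).toNNReal)) (gaussianReal 0 1) ^ 2
        ∂(gaussianReal 0 1)) = 2 * (1 - Real.sqrt (1 - ρ ^ 2)) ∧
    (∫ y, ∫ y', (y - y') ^ 2 ∂(gaussianReal 0 1) ∂(gaussianReal 0 1)) = 2 ∧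
    (∫ x, Wass (fun y y' => dist y y') 2
        (gaussianReal (ρ * x) ((1 - ρ ^ 2).toNNReal)) (gaussianReal 0 1) ^ 2
        ∂(gaussianReal 0 1)) /
      (∫ y, ∫ y', (y - y') ^ 2 ∂(gaussianReal 0 1) ∂(gaussianReal 0 1))
      = 1 - Real.sqrt (1 - ρ ^ 2) := by
  obtain ⟨hρ1, hρ2⟩ := hρ
  have h1ρ : 0 ≤ 1 - ρ ^ 2 := by nlinarith
  have hsd : Real.sqrt ((1 - ρ ^ 2).toNNReal : ℝ) = Real.sqrt (1 - ρ ^ 2) := by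
    rw [Real.coe_toNNReal _ h1ρ]
  have hs_le : Real.sqrt (1 - ρ ^ 2) ^ 2 = 1 - ρ ^ 2 := Real.sq_sqrt h1ρ
  set C : ℝ := (Real.sqrt (1 - ρ ^ 2) - 1) ^ 2 with hC_def
  have hwass : ∀ x : ℝ, Wass (fun y y' => dist y y') 2
      (gaussianReal (ρ * x) ((1 - ρ ^ 2).toNNReal)) (gaussianReal 0 1) ^ 2
      = ρ ^ 2 * x ^ 2 + C := by
    intro x
    have hwg := wass_gaussian (ρ * x) 0 ((1 - ρ ^ 2).toNNReal) 1
    rw [hwg]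
    rw [Real.sq_sqrt (by positivity)]
    rw [hsd]
    simp only [NNReal.coe_one, Real.sqrt_one, sub_zero]
    ring
  have hW : (∫ x, Wass (fun y y' => dist y y') 2
        (gaussianReal (ρ * x) ((1 - ρ ^ 2).toNNReal)) (gaussianReal 0 1) ^ 2
        ∂(gaussianReal 0 1)) = 2 * (1 - Real.sqrt (1 - ρ ^ 2)) := by
    have hre : (fun x => Wass (fun y y' => dist y y') 2
        (gaussianReal (ρ * x) ((1 - ρ ^ 2).toNNReal)) (gaussianReal 0 1) ^ 2)
        = fun x : ℝ => ρ ^ 2 * x ^ 2 + C := by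
      ext x; exact hwass x
    have IA : Integrable (fun x : ℝ => ρ ^ 2 * x ^ 2) (gaussianReal 0 1) :=
      std_integrable_sq.const_mul _
    have IB : Integrable (fun _ : ℝ => C) (gaussianReal 0 1) := integrable_const _
    rw [hre, integral_add IA IB, integral_const_mul, std_integral_sq, integral_const]
    simp only [measure_univ, probReal_univ, ENNReal.toReal_one, smul_eq_mul, one_mul, mul_one]
    rw [hC_def]
    nlinarith [hs_le]
  have hinner : ∀ y : ℝ, ∫ y', (y - y') ^ 2 ∂(gaussianReal 0 1) = y ^ 2 + 1 := by
    intro y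
    have hre : (fun y' : ℝ => (y - y') ^ 2)
        = fun y' : ℝ => y' ^ 2 + ((-(2 * y)) * y' + y ^ 2) := by
      ext y'; ring
    have IB : Integrable (fun y' : ℝ => (-(2 * y)) * y') (gaussianReal 0 1) :=
      std_integrable_id.const_mul _
    have IC : Integrable (fun _ : ℝ => y ^ 2) (gaussianReal 0 1) := integrable_const _
    have IBC : Integrable (fun y' : ℝ => (-(2 * y)) * y' + y ^ 2) (gaussianReal 0 1) := IB.add IC
    rw [hre, integral_add std_integrable_sq IBC, integral_add IB IC, integral_const_mul,
      std_integral_sq, std_integral_id, integral_const]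
    simp
    ring
  have hE : (∫ y, ∫ y', (y - y') ^ 2 ∂(gaussianReal 0 1) ∂(gaussianReal 0 1)) = 2 := by
    have hre : (fun y : ℝ => ∫ y', (y - y') ^ 2 ∂(gaussianReal 0 1)) = fun y => y ^ 2 + 1 := by
      ext y; exact hinner y
    have IC : Integrable (fun _ : ℝ => (1:ℝ)) (gaussianReal 0 1) := integrable_const _
    rw [hre, integral_add std_integrable_sq IC, std_integral_sq, integral_const]
    simp
    norm_num
  refine ⟨hW, hE, ?_⟩
  rw [hW, hE]
  ring
end

section
/- Let X be an absolutely continuous real random variable with finite second moment satisfying the symmetry (a − X) =_d X for some a ∈ ℝ. Let γ₊ = L(X,X) and γ₋ = L(X, a−X). Then over all couplings γ of L(X) with itself (laws of pairs (X,Y) with Y =_d X), the quadratic Wasserstein distance to the diagonal is maximized by the antithetic coupling: sup_{γ ∈ Γ(X,X)} W₂(γ, γ₊) = W₂(γ₋, γ₊). -/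
open MeasureTheory ProbabilityTheory

def IsCoupling {α β : Type*} [MeasurableSpace α] [MeasurableSpace β]
    (γ : Measure (α × β)) (P : Measure α) (Q : Measure β) : Prop :=
  γ.map Prod.fst = P ∧ γ.map Prod.snd = Q

section Coupling

variable {α β : Type*} [MeasurableSpace α] [MeasurableSpace β] {γ : Measure (α × β)}
  {P : Measure α} {Q : Measure β} {f : α → ℝ} {g : β → ℝ}

lemma IsCoupling.isProbabilityMeasure [IsProbabilityMeasure P] (h : IsCoupling γ P Q) :
    IsProbabilityMeasure γ := by
  obtain ⟨rfl, -⟩ := h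
  exact Measure.isProbabilityMeasure_of_map Prod.fst

lemma IsCoupling.ae_fst {p : α → Prop} (h : IsCoupling γ P Q) (hp : ∀ᵐ x ∂P, p x) :
    ∀ᵐ z ∂γ, p z.1 := by
  obtain ⟨rfl, -⟩ := h
  exact ae_of_ae_map measurable_fst.aemeasurable hp

lemma IsCoupling.ae_snd {p : β → Prop} (h : IsCoupling γ P Q) (hp : ∀ᵐ y ∂Q, p y) :
    ∀ᵐ z ∂γ, p z.2 := by
  obtain ⟨-, rfl⟩ := h
  exact ae_of_ae_map measurable_snd.aemeasurable hp

lemma IsCoupling.integrable_comp_fst (h : IsCoupling γ P Q) (hf : Integrable f P) :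
    Integrable (fun z => f z.1) γ := by
  obtain ⟨rfl, -⟩ := h
  exact (integrable_map_measure hf.1 measurable_fst.aemeasurable).mp hf

lemma IsCoupling.integrable_comp_snd (h : IsCoupling γ P Q) (hg : Integrable g Q) :
    Integrable (fun z => g z.2) γ := by
  obtain ⟨-, rfl⟩ := h
  exact (integrable_map_measure hg.1 measurable_snd.aemeasurable).mp hg

lemma IsCoupling.integrable_comp_fst_add_comp_snd (h : IsCoupling γ P Q) (hf : Integrable f P)
    (hg : Integrable g Q) : Integrable (fun z => f z.1 + g z.2) γ :=
  (h.integrable_comp_fst hf).add (h.integrable_comp_snd hg)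

lemma IsCoupling.integral_comp_fst_add_comp_snd (h : IsCoupling γ P Q) (hf : Integrable f P)
    (hg : Integrable g Q) : ∫ z, (f z.1 + g z.2) ∂γ = ∫ x, f x ∂P + ∫ y, g y ∂Q := by
  rw [integral_add (h.integrable_comp_fst hf) (h.integrable_comp_snd hg)]
  obtain ⟨rfl, rfl⟩ := h
  rw [integral_map measurable_fst.aemeasurable hf.1,
    integral_map measurable_snd.aemeasurable hg.1]

end Coupling

section Wasserstein

variable {α : Type*} [MeasurableSpace α] {d : α → α → ℝ} {p : ℝ} {P Q : Measure α}

lemma Wass_le_of_isCoupling (hd : ∀ x y, 0 ≤ d x y) {π : Measure (α × α)}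
    (hπ : IsCoupling π P Q) : Wass d p P Q ≤ (∫ z, d z.1 z.2 ^ p ∂π) ^ (1 / p) := by
  refine csInf_le ⟨0, ?_⟩ ⟨π, hπ, rfl⟩
  rintro _ ⟨π', -, rfl⟩
  exact Real.rpow_nonneg (integral_nonneg fun z => Real.rpow_nonneg (hd _ _) _) _

lemma Wass_eq_of_forall_isCoupling {c : ℝ} (hex : ∃ π, IsCoupling π P Q)
    (hc : ∀ π, IsCoupling π P Q → ∫ z, d z.1 z.2 ^ p ∂π = c) :
    Wass d p P Q = c ^ (1 / p) := by
  suffices h : (fun π : Measure (α × α) => (∫ z, d z.1 z.2 ^ p ∂π) ^ (1 / p)) ''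
      {π | IsCoupling π P Q} = {c ^ (1 / p)} by
    change sInf (_ '' {π | IsCoupling π P Q}) = _
    rw [h, csInf_singleton]
  obtain ⟨π₀, hπ₀⟩ := hex
  refine Set.eq_singleton_iff_unique_mem.mpr ⟨⟨π₀, hπ₀, congrArg (· ^ (1 / p)) (hc π₀ hπ₀)⟩, ?_⟩
  rintro _ ⟨π, hπ, rfl⟩
  exact congrArg (· ^ (1 / p)) (hc π hπ)

end Wasserstein

section IndepCoupling

variable {α β : Type*} [MeasurableSpace α] [MeasurableSpace β]

noncomputable def indepDiagCoupling (γ : Measure α) (ν : Measure β) : Measure (α × (β × β)) :=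
  (γ.prod ν).map fun p => (p.1, (p.2, p.2))

lemma measurable_prodDiag : Measurable fun p : α × β => (p.1, (p.2, p.2)) := by fun_prop

lemma isCoupling_indepDiagCoupling (γ : Measure α) (ν : Measure β) [IsProbabilityMeasure γ]
    [IsProbabilityMeasure ν] :
    IsCoupling (indepDiagCoupling γ ν) γ (ν.map fun y => (y, y)) := by
  refine ⟨?_, ?_⟩
  · rw [indepDiagCoupling, Measure.map_map measurable_fst measurable_prodDiag]
    exact Measure.fst_prod
  · rw [indepDiagCoupling, Measure.map_map measurable_snd measurable_prodDiag]
    change (γ.prod ν).map ((fun y : β => (y, y)) ∘ Prod.snd) = _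
    rw [← Measure.map_map (by fun_prop) measurable_snd]
    exact congrArg _ Measure.snd_prod

end IndepCoupling

noncomputable def euclideanDist (z z' : ℝ × ℝ) : ℝ := √((z.1 - z'.1) ^ 2 + (z.2 - z'.2) ^ 2)

lemma euclideanDist_nonneg (z z' : ℝ × ℝ) : 0 ≤ euclideanDist z z' := Real.sqrt_nonneg _

lemma euclideanDist_rpow_two (z z' : ℝ × ℝ) :
    euclideanDist z z' ^ (2 : ℝ) = (z.1 - z'.1) ^ 2 + (z.2 - z'.2) ^ 2 := by
  rw [Real.rpow_two, euclideanDist, Real.sq_sqrt (by positivity)]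

lemma measurable_euclideanDist_rpow_two :
    Measurable fun z : (ℝ × ℝ) × (ℝ × ℝ) => euclideanDist z.1 z.2 ^ (2 : ℝ) := by
  unfold euclideanDist
  fun_prop

section LawOnReal

variable {ν : Measure ℝ} {a : ℝ}

lemma isCoupling_map_diag : IsCoupling (ν.map fun x => (x, x)) ν ν :=
  ⟨(Measure.fst_map_prodMk measurable_id').trans Measure.map_id',
    (Measure.snd_map_prodMk measurable_id').trans Measure.map_id'⟩

lemma isCoupling_map_antithetic (hsym : ν.map (fun x => a - x) = ν) :
    IsCoupling (ν.map fun x => (x, a - x)) ν ν :=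
  ⟨(Measure.fst_map_prodMk (by fun_prop)).trans Measure.map_id',
    (Measure.snd_map_prodMk measurable_id').trans hsym⟩

variable [IsProbabilityMeasure ν]

lemma integral_id_eq_half_of_map_const_sub (hν : Integrable id ν)
    (hsym : ν.map (fun x => a - x) = ν) : ∫ x, x ∂ν = a / 2 := by
  have h := congrArg (fun m : Measure ℝ => ∫ x, x ∂m) hsym
  rw [integral_map (f := fun x => x) (by fun_prop) aestronglyMeasurable_id,
    integral_sub (g := fun x => x) (integrable_const a) hν, integral_const] at h
  simp only [probReal_univ, smul_eq_mul, one_mul] at h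
  linarith

lemma integral_euclideanDist_sq_indepDiagCoupling (hν : MemLp id 2 ν) {γ : Measure (ℝ × ℝ)}
    (hγ : IsCoupling γ ν ν) :
    ∫ z, euclideanDist z.1 z.2 ^ (2 : ℝ) ∂(indepDiagCoupling γ ν) = 4 * Var[id; ν] := by
  have := hγ.isProbabilityMeasure
  have hν₁ : Integrable (fun x => x) ν := hν.integrable one_le_two
  have hν₂ : Integrable (fun x => x ^ 2) ν := hν.integrable_sq
  have hprod : IsCoupling (γ.prod ν) γ ν := ⟨Measure.fst_prod, Measure.snd_prod⟩
  have hsq : Integrable (fun z : ℝ × ℝ => z.1 ^ 2 + z.2 ^ 2) γ :=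
    hγ.integrable_comp_fst_add_comp_snd hν₂ hν₂
  have hsum : Integrable (fun z : ℝ × ℝ => z.1 + z.2) γ :=
    hγ.integrable_comp_fst_add_comp_snd hν₁ hν₁
  have hexpand : ∀ p : (ℝ × ℝ) × ℝ, euclideanDist p.1 (p.2, p.2) ^ (2 : ℝ) =
      ((p.1.1 ^ 2 + p.1.2 ^ 2) + 2 * p.2 ^ 2) - 2 * ((p.1.1 + p.1.2) * p.2) := by
    intro p
    rw [euclideanDist_rpow_two]
    ring
  rw [indepDiagCoupling, integral_map measurable_prodDiag.aemeasurable
    measurable_euclideanDist_rpow_two.aestronglyMeasurable]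
  simp only [hexpand]
  rw [integral_sub (hprod.integrable_comp_fst_add_comp_snd hsq (hν₂.const_mul 2))
      ((hsum.mul_prod hν₁).const_mul 2),
    hprod.integral_comp_fst_add_comp_snd hsq (hν₂.const_mul 2), integral_const_mul,
    integral_const_mul, integral_prod_mul (fun z : ℝ × ℝ => z.1 + z.2) (fun x => x),
    hγ.integral_comp_fst_add_comp_snd hν₂ hν₂, hγ.integral_comp_fst_add_comp_snd hν₁ hν₁,
    variance_eq_sub hν]
  simp only [Pi.pow_apply, id]
  ring

lemma integral_euclideanDist_sq_of_isCoupling_antithetic_diag (hν : MemLp id 2 ν)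
    (hsym : ν.map (fun x => a - x) = ν) {π : Measure ((ℝ × ℝ) × (ℝ × ℝ))}
    (hπ : IsCoupling π (ν.map fun x => (x, a - x)) (ν.map fun x => (x, x))) :
    ∫ z, euclideanDist z.1 z.2 ^ (2 : ℝ) ∂π = 4 * Var[id; ν] := by
  have hν₁ : Integrable (fun x => x) ν := hν.integrable one_le_two
  have hν₂ : Integrable (fun x => x ^ 2) ν := hν.integrable_sq
  have hν₃ : Integrable (fun x => x ^ 2 - a * x) ν := hν₂.sub (hν₁.const_mul a)
  have hanti := isCoupling_map_antithetic hsym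
  have hdiag := isCoupling_map_diag (ν := ν)
  have hsum : ∀ᵐ z ∂π, z.1.1 + z.1.2 = a := hπ.ae_fst <| (ae_map_iff (by fun_prop)
    (measurableSet_eq_fun (f := fun w : ℝ × ℝ => w.1 + w.2) (by fun_prop) measurable_const)).mpr
    (.of_forall fun x => add_sub_cancel x a)
  have heq : ∀ᵐ z ∂π, z.2.1 = z.2.2 := hπ.ae_snd <| (ae_map_iff (by fun_prop)
    (measurableSet_eq_fun measurable_fst measurable_snd)).mpr (.of_forall fun x => rfl)
  -- `γ₋` lives on the line `w.1 + w.2 = a` and `γ₊` on the diagonal, so there the cross term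
  -- of the quadratic cost is a function of `z.2` alone
  have hcost : (fun z => euclideanDist z.1 z.2 ^ (2 : ℝ)) =ᵐ[π] fun z =>
      (z.1.1 ^ 2 + z.1.2 ^ 2) + ((z.2.1 ^ 2 - a * z.2.1) + (z.2.2 ^ 2 - a * z.2.2)) := by
    filter_upwards [hsum, heq] with z hz₁ hz₂
    rw [euclideanDist_rpow_two]
    linear_combination (-2 * z.2.1) * hz₁ + (2 * z.1.2 - a) * hz₂
  rw [integral_congr_ae hcost,
    hπ.integral_comp_fst_add_comp_snd (hanti.integrable_comp_fst_add_comp_snd hν₂ hν₂)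
      (hdiag.integrable_comp_fst_add_comp_snd hν₃ hν₃),
    hanti.integral_comp_fst_add_comp_snd hν₂ hν₂, hdiag.integral_comp_fst_add_comp_snd hν₃ hν₃,
    integral_sub hν₂ (hν₁.const_mul a), integral_const_mul, variance_eq_sub hν]
  simp only [Pi.pow_apply, id]
  rw [integral_id_eq_half_of_map_const_sub hν₁ hsym]
  ring

theorem isGreatest_Wass_map_diag (hν : MemLp id 2 ν) (hsym : ν.map (fun x => a - x) = ν) :
    IsGreatest ((fun γ => Wass euclideanDist 2 γ (ν.map fun x => (x, x))) ''
      {γ | IsCoupling γ ν ν})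
      (Wass euclideanDist 2 (ν.map fun x => (x, a - x)) (ν.map fun x => (x, x))) := by
  have hanti := isCoupling_map_antithetic hsym
  have := hanti.isProbabilityMeasure
  have hWass : Wass euclideanDist 2 (ν.map fun x => (x, a - x)) (ν.map fun x => (x, x)) =
      (4 * Var[id; ν]) ^ (1 / (2 : ℝ)) :=
    Wass_eq_of_forall_isCoupling ⟨_, isCoupling_indepDiagCoupling _ ν⟩
      fun π hπ => integral_euclideanDist_sq_of_isCoupling_antithetic_diag hν hsym hπ
  refine ⟨⟨_, hanti, rfl⟩, ?_⟩
  rintro _ ⟨γ, hγ, rfl⟩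
  have := hγ.isProbabilityMeasure
  rw [hWass, ← integral_euclideanDist_sq_indepDiagCoupling hν hγ]
  exact Wass_le_of_isCoupling euclideanDist_nonneg (isCoupling_indepDiagCoupling γ ν)

end LawOnReal

theorem stmt16_general {Ω : Type*} [MeasurableSpace Ω]
    (μ : Measure Ω) [IsProbabilityMeasure μ]
    (X : Ω → ℝ) (hX : Measurable X)
    (hm : MemLp X 2 μ)
    (a : ℝ) (hsym : μ.map (fun ω => a - X ω) = μ.map X) :
    sSup ((fun γ : Measure (ℝ × ℝ) =>
        Wass (fun z z' : ℝ × ℝ => Real.sqrt ((z.1 - z'.1) ^ 2 + (z.2 - z'.2) ^ 2)) 2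
          γ (μ.map (fun ω => (X ω, X ω)))) ''
      {γ : Measure (ℝ × ℝ) | γ.map Prod.fst = μ.map X ∧ γ.map Prod.snd = μ.map X})
      = Wass (fun z z' : ℝ × ℝ => Real.sqrt ((z.1 - z'.1) ^ 2 + (z.2 - z'.2) ^ 2)) 2
          (μ.map (fun ω => (X ω, a - X ω))) (μ.map (fun ω => (X ω, X ω))) := by
  have := Measure.isProbabilityMeasure_map (μ := μ) hX.aemeasurable
  have hdiag : μ.map (fun ω => (X ω, X ω)) = (μ.map X).map fun x => (x, x) :=
    (Measure.map_map (g := fun x => (x, x)) (by fun_prop) hX).symm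
  have hanti : μ.map (fun ω => (X ω, a - X ω)) = (μ.map X).map fun x => (x, a - x) :=
    (Measure.map_map (g := fun x => (x, a - x)) (by fun_prop) hX).symm
  have hsym' : (μ.map X).map (fun x => a - x) = μ.map X := by
    rwa [Measure.map_map (g := fun x => a - x) (by fun_prop) hX]
  rw [hdiag, hanti]
  exact (isGreatest_Wass_map_diag
    ((memLp_map_measure_iff aestronglyMeasurable_id hX.aemeasurable).mpr hm) hsym').csSup_eq

theorem stmt16 {Ω : Type*} [MeasurableSpace Ω]
    (μ : Measure Ω) [IsProbabilityMeasure μ]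
    (X : Ω → ℝ) (hX : Measurable X)
    (habs : μ.map X ≪ volume) (hm : MemLp X 2 μ)
    (a : ℝ) (hsym : μ.map (fun ω => a - X ω) = μ.map X) :
    sSup ((fun γ : Measure (ℝ × ℝ) =>
        Wass (fun z z' : ℝ × ℝ => Real.sqrt ((z.1 - z'.1) ^ 2 + (z.2 - z'.2) ^ 2)) 2
          γ (μ.map (fun ω => (X ω, X ω)))) ''
      {γ : Measure (ℝ × ℝ) | γ.map Prod.fst = μ.map X ∧ γ.map Prod.snd = μ.map X})
      = Wass (fun z z' : ℝ × ℝ => Real.sqrt ((z.1 - z'.1) ^ 2 + (z.2 - z'.2) ^ 2)) 2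
          (μ.map (fun ω => (X ω, a - X ω))) (μ.map (fun ω => (X ω, X ω))) :=
  stmt16_general μ X hX hm a hsym
end

section
/- Let X₁,…,X_m, X_{m+1} be random variables on Polish metric spaces, with (X₁,…,X_m) independent of X_{m+1}. Equip products with the ℓ¹ sum of the coordinate metrics. Then W_{d,p}(L(X₁,…,X_{m+1}), L(X₁) ⊗ ⋯ ⊗ L(X_{m+1})) ≤ W_{d,p}(L(X₁,…,X_m), L(X₁) ⊗ ⋯ ⊗ L(X_m)). -/
open MeasureTheory ProbabilityTheory

section Aux

variable {m : ℕ} (𝕏 : Fin (m + 1) → Type*) [∀ i, MeasurableSpace (𝕏 i)]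

lemma measurable_snocF :
    Measurable (fun q : (∀ i : Fin m, 𝕏 i.castSucc) × 𝕏 (Fin.last m) =>
      (Fin.snoc q.1 q.2 : ∀ i, 𝕏 i)) := by
  apply measurable_pi_lambda
  intro i
  induction i using Fin.lastCases with
  | last => simpa [Fin.snoc_last] using measurable_snd
  | cast j => simp only [Fin.snoc_castSucc]; exact (measurable_pi_apply j).comp measurable_fst

lemma pi_snoc (μs : ∀ i, Measure (𝕏 i)) [∀ i, IsProbabilityMeasure (μs i)] :
    Measure.pi μs =
      ((Measure.pi fun i : Fin m => μs i.castSucc).prod (μs (Fin.last m))).map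
        (fun q => (Fin.snoc q.1 q.2 : ∀ i, 𝕏 i)) := by
  refine Measure.pi_eq fun s hs => ?_
  rw [Measure.map_apply (measurable_snocF 𝕏) (MeasurableSet.univ_pi hs)]
  have hset : (fun q : (∀ i : Fin m, 𝕏 i.castSucc) × 𝕏 (Fin.last m) =>
      (Fin.snoc q.1 q.2 : ∀ i, 𝕏 i)) ⁻¹' Set.pi Set.univ s
      = (Set.pi Set.univ fun j : Fin m => s j.castSucc) ×ˢ s (Fin.last m) := by
    ext q
    simp only [Set.mem_preimage, Set.mem_pi, Set.mem_univ, forall_true_left, Set.mem_prod]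
    constructor
    · intro h
      refine ⟨fun j => ?_, ?_⟩
      · have := h j.castSucc; rwa [Fin.snoc_castSucc] at this
      · have := h (Fin.last m); rwa [Fin.snoc_last] at this
    · rintro ⟨h1, h2⟩ i
      induction i using Fin.lastCases with
      | last => rwa [Fin.snoc_last]
      | cast j => rw [Fin.snoc_castSucc]; exact h1 j
  rw [hset, Measure.prod_prod, Measure.pi_pi, Fin.prod_univ_castSucc]

end Aux

theorem stmt17 {Ω : Type*} [MeasurableSpace Ω]
    (μ : Measure Ω) [IsProbabilityMeasure μ]
    (m : ℕ) (𝕏 : Fin (m + 1) → Type*)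
    [∀ i, MetricSpace (𝕏 i)] [∀ i, PolishSpace (𝕏 i)]
    [∀ i, MeasurableSpace (𝕏 i)] [∀ i, BorelSpace (𝕏 i)]
    (X : ∀ i, Ω → 𝕏 i) (hX : ∀ i, Measurable (X i))
    (p : ℝ) (hp : 1 ≤ p) (x₀ : ∀ i, 𝕏 i)
    (hmom : ∀ i, Integrable (fun ω => dist (X i ω) (x₀ i) ^ p) μ)
    (hindep : IndepFun (fun ω => fun i : Fin m => X i.castSucc ω) (X (Fin.last m)) μ) :
    Wass (fun x y => ∑ i, dist (x i) (y i)) p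
        (μ.map (fun ω => fun i => X i ω)) (Measure.pi fun i => μ.map (X i))
      ≤ Wass (fun x y => ∑ i, dist (x i) (y i)) p
        (μ.map (fun ω => fun i : Fin m => X i.castSucc ω))
        (Measure.pi fun i : Fin m => μ.map (X i.castSucc)) := by
  classical
  set β := ∀ i : Fin m, 𝕏 i.castSucc with hβ
  set α := ∀ i : Fin (m + 1), 𝕏 i with hα
  set Y : Ω → β := fun ω => fun i : Fin m => X i.castSucc ω with hY
  set Z : Ω → 𝕏 (Fin.last m) := X (Fin.last m) with hZ
  have hYm : Measurable Y := measurable_pi_lambda _ fun i => hX i.castSucc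
  have hZm : Measurable Z := hX (Fin.last m)
  haveI : ∀ i, IsProbabilityMeasure (μ.map (X i)) :=
    fun i => Measure.isProbabilityMeasure_map (hX i).aemeasurable
  haveI : IsProbabilityMeasure (μ.map Y) := Measure.isProbabilityMeasure_map hYm.aemeasurable
  set ν : Measure (𝕏 (Fin.last m)) := μ.map Z with hν
  haveI : IsProbabilityMeasure ν := Measure.isProbabilityMeasure_map hZm.aemeasurable
  set P0 : Measure β := μ.map Y with hP0
  set Q0 : Measure β := Measure.pi fun i : Fin m => μ.map (X i.castSucc) with hQ0
  -- independence as product of laws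
  have hprod : μ.map (fun ω => (Y ω, Z ω)) = P0.prod ν :=
    (indepFun_iff_map_prod_eq_prod_map_map hYm.aemeasurable hZm.aemeasurable).mp hindep
  have hmeasβ : Measurable (fun z : β × β => (∑ i, dist (z.1 i) (z.2 i)) ^ p) :=
    Measurable.pow (Finset.measurable_sum _ fun i _ =>
      measurable_dist.comp (((measurable_pi_apply i).comp measurable_fst).prodMk
        ((measurable_pi_apply i).comp measurable_snd))) measurable_const
  have hmeasα : Measurable (fun z : α × α => (∑ i, dist (z.1 i) (z.2 i)) ^ p) :=
    Measurable.pow (Finset.measurable_sum _ fun i _ =>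
      measurable_dist.comp (((measurable_pi_apply i).comp measurable_fst).prodMk
        ((measurable_pi_apply i).comp measurable_snd))) measurable_const
  rw [Wass, Wass]
  apply le_csInf
  · -- nonempty: product coupling
    refine ⟨(fun γ : Measure (β × β) => (∫ z, (∑ i, dist (z.1 i) (z.2 i)) ^ p ∂γ) ^ (1 / p))
      (P0.prod Q0), ⟨P0.prod Q0, ⟨?_, ?_⟩, rfl⟩⟩
    · rw [Measure.map_fst_prod]; simp
    · rw [Measure.map_snd_prod]; simp
  · rintro b ⟨γ, ⟨hγ1, hγ2⟩, rfl⟩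
    haveI : IsProbabilityMeasure γ := by
      constructor
      have : γ.map Prod.fst Set.univ = 1 := by rw [hγ1]; simp
      rwa [Measure.map_apply measurable_fst MeasurableSet.univ, Set.preimage_univ] at this
    set G : (β × β) × 𝕏 (Fin.last m) → α × α :=
      fun q => ((Fin.snoc q.1.1 q.2 : α), (Fin.snoc q.1.2 q.2 : α)) with hG
    have hGm : Measurable G := by
      apply Measurable.prod
      · exact (measurable_snocF 𝕏).comp ((measurable_fst.comp measurable_fst).prodMk
          measurable_snd)
      · exact (measurable_snocF 𝕏).comp ((measurable_snd.comp measurable_fst).prodMk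
          measurable_snd)
    set γ' : Measure (α × α) := (γ.prod ν).map G with hγ'
    -- first marginal
    have hm1 : γ'.map Prod.fst = μ.map (fun ω => fun i => X i ω) := by
      rw [hγ', Measure.map_map measurable_fst hGm]
      have h1 : (Prod.fst ∘ G) = (fun q : β × 𝕏 (Fin.last m) => (Fin.snoc q.1 q.2 : α)) ∘
          (Prod.map Prod.fst id) := rfl
      rw [h1, ← Measure.map_map (measurable_snocF 𝕏) (measurable_fst.prodMap measurable_id),
        ← Measure.map_prod_map _ _ measurable_fst measurable_id, hγ1, Measure.map_id]
      rw [show P0.prod ν = μ.map (fun ω => (Y ω, Z ω)) from hprod.symm,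
        Measure.map_map (measurable_snocF 𝕏) (hYm.prodMk hZm)]
      congr 1
      funext ω
      funext i
      induction i using Fin.lastCases with
      | last => simp [Function.comp, Fin.snoc_last, hZ]
      | cast j => simp [Function.comp, Fin.snoc_castSucc, hY]
    -- second marginal
    have hm2 : γ'.map Prod.snd = Measure.pi fun i => μ.map (X i) := by
      rw [hγ', Measure.map_map measurable_snd hGm]
      have h1 : (Prod.snd ∘ G) = (fun q : β × 𝕏 (Fin.last m) => (Fin.snoc q.1 q.2 : α)) ∘
          (Prod.map Prod.snd id) := rfl
      rw [h1, ← Measure.map_map (measurable_snocF 𝕏) (measurable_snd.prodMap measurable_id),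
        ← Measure.map_prod_map _ _ measurable_snd measurable_id, hγ2, Measure.map_id]
      exact (pi_snoc 𝕏 fun i => μ.map (X i)).symm
    -- cost equality
    have hcost : (∫ z : α × α, (∑ i, dist (z.1 i) (z.2 i)) ^ p ∂γ')
        = ∫ z : β × β, (∑ i, dist (z.1 i) (z.2 i)) ^ p ∂γ := by
      rw [hγ', integral_map hGm.aemeasurable]
      · have h1 : ∀ q : (β × β) × 𝕏 (Fin.last m),
            (∑ i, dist ((G q).1 i) ((G q).2 i)) ^ p
              = (∑ i, dist (q.1.1 i) (q.1.2 i)) ^ p := by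
          intro q
          congr 1
          rw [Fin.sum_univ_castSucc]
          simp [hG, Fin.snoc_castSucc, Fin.snoc_last]
        simp_rw [h1]
        have h2 : ∫ q : (β × β) × 𝕏 (Fin.last m), (∑ i, dist (q.1.1 i) (q.1.2 i)) ^ p
            ∂(γ.prod ν) = ∫ z : β × β, (∑ i, dist (z.1 i) (z.2 i)) ^ p
            ∂((γ.prod ν).map Prod.fst) := by
          rw [integral_map measurable_fst.aemeasurable hmeasβ.aestronglyMeasurable]
        rw [h2, Measure.map_fst_prod]
        simp
      · exact hmeasα.aestronglyMeasurable
    -- conclude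
    have hmem : (∫ z : β × β, (∑ i, dist (z.1 i) (z.2 i)) ^ p ∂γ) ^ (1 / p) ∈
        ((fun γ : Measure (α × α) => (∫ z, (∑ i, dist (z.1 i) (z.2 i)) ^ p ∂γ) ^ (1 / p)) ''
          {γ | γ.map Prod.fst = μ.map (fun ω => fun i => X i ω) ∧
            γ.map Prod.snd = Measure.pi fun i => μ.map (X i)}) :=
      ⟨γ', ⟨hm1, hm2⟩, by
        show (∫ z : α × α, (∑ i, dist (z.1 i) (z.2 i)) ^ p ∂γ') ^ (1 / p) = _
        rw [hcost]⟩
    apply csInf_le _ hmem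
    refine ⟨0, ?_⟩
    rintro x ⟨δ, -, rfl⟩
    apply Real.rpow_nonneg
    apply integral_nonneg
    intro z
    apply Real.rpow_nonneg
    exact Finset.sum_nonneg fun i _ => dist_nonneg
end
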